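/- arXiv:2602.15517 — 11 statements merged into one kernel-verified Lean document; each statement's English description precedes it below -/
import Mathlib

section
/- For every complex number s, the bilateral Laplace transform of the Ricker wavelet satisfies B{q}(s) = −(4·√π/α³)·s²·exp((s/α)² − s·t₀), i.e. ∫_ℝ (1 − (α²/2)·(t − t₀)²)·exp(−(α²/4)·(t − t₀)²)·exp(−s·t) dt = −(4·√π/α³)·s²·exp(s²/α² − s·t₀). -/
open MeasureTheory
open Complex Filter Real Topology


lemma quad_re (b c d : ℂ) (u : ℝ) :
    (b * (u:ℂ)^2 + c * u + d).re = b.re * u^2 + c.re * u + d.re := by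
  simp [Complex.add_re, Complex.mul_re, ← Complex.ofReal_pow]

lemma ricker_aux_tendsto (b c d p q : ℂ) (hb : b.re < 0) :
    Tendsto (fun u : ℝ => (p + q * u) * Complex.exp (b * u^2 + c * u + d)) atTop (𝓝 0) := by
  set a : ℝ := -b.re / 2 with ha
  have ha' : 0 < a := by simp only [ha]; linarith
  set M : ℝ := c.re^2 / (4*a) + d.re with hM
  apply squeeze_zero_norm' (a := fun u : ℝ => Real.exp (-(a/2) * u^2 + M))
  · filter_upwards [eventually_ge_atTop (max 1 (2*(‖p‖+‖q‖+1)/a))] with u hu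
    have hu1 : (1:ℝ) ≤ u := le_trans (le_max_left _ _) hu
    have hu2 : 2*(‖p‖+‖q‖+1)/a ≤ u := le_trans (le_max_right _ _) hu
    have hu2' : 2*(‖p‖+‖q‖+1) ≤ a * u := by
      rw [div_le_iff₀ ha'] at hu2; linarith [hu2]
    have hpoly : ‖p‖ + ‖q‖ * u ≤ (a/2) * u^2 := by
      nlinarith [norm_nonneg p, norm_nonneg q, sq_nonneg u]
    have hquad : b.re * u^2 + c.re * u + d.re ≤ -a * u^2 + M := by
      have : 0 ≤ a * (u - c.re/(2*a))^2 := by positivity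
      have hexp : a * (u - c.re/(2*a))^2 = a*u^2 - c.re*u + c.re^2/(4*a) := by
        field_simp
        ring
      simp only [hM]
      nlinarith [this, hexp]
    calc ‖(p + q * u) * Complex.exp (b * u^2 + c * u + d)‖
        = ‖p + q * u‖ * Real.exp (b.re * u^2 + c.re * u + d.re) := by
          rw [norm_mul, Complex.norm_exp, quad_re]
      _ ≤ (‖p‖ + ‖q‖ * u) * Real.exp (b.re * u^2 + c.re * u + d.re) := by
          apply mul_le_mul_of_nonneg_right _ (Real.exp_nonneg _)
          calc ‖p + q * u‖ ≤ ‖p‖ + ‖q‖ * ‖(u:ℂ)‖ := by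
                refine le_trans (norm_add_le _ _) ?_
                rw [norm_mul]
            _ = ‖p‖ + ‖q‖ * u := by
                rw [Complex.norm_real, Real.norm_eq_abs, _root_.abs_of_nonneg (by linarith : (0:ℝ) ≤ u)]
      _ ≤ Real.exp ((a/2) * u^2) * Real.exp (-a * u^2 + M) := by
          apply mul_le_mul _ (Real.exp_le_exp.mpr hquad) (Real.exp_nonneg _) (Real.exp_nonneg _)
          exact le_trans hpoly (by linarith [Real.add_one_le_exp ((a/2) * u^2)])
      _ = Real.exp (-(a/2) * u^2 + M) := by rw [← Real.exp_add]; ring_nf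
  · apply Real.tendsto_exp_atBot.comp
    have h1 : Tendsto (fun u : ℝ => -(a/2) * u^2) atTop atBot :=
      (tendsto_pow_atTop two_ne_zero).const_mul_atTop_of_neg (by linarith)
    exact tendsto_atBot_add_const_right _ M h1



lemma ricker_aux_tendsto_top (b c d p : ℂ) (hb : b.re < 0) :
    Tendsto (fun u : ℝ => (p + u) * Complex.exp (b * u^2 + c * u + d)) atTop (𝓝 0) := by
  have := ricker_aux_tendsto b c d p 1 hb
  simpa using this

lemma ricker_aux_tendsto_bot (b c d p : ℂ) (hb : b.re < 0) :
    Tendsto (fun u : ℝ => (p + u) * Complex.exp (b * u^2 + c * u + d)) atBot (𝓝 0) := by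
  have h := (ricker_aux_tendsto b (-c) d p (-1) hb).comp tendsto_neg_atBot_atTop
  convert h using 1
  funext u
  simp only [Function.comp_apply]
  push_cast
  ring_nf

lemma ricker_aux_integrable (n : ℕ) {b : ℂ} (hb : b.re < 0) (c d : ℂ) :
    Integrable fun x : ℝ => (x:ℂ)^n * Complex.exp (b * x^2 + c * x + d) := by
  set a : ℝ := -b.re / 2 with ha
  have ha' : 0 < a := by simp only [ha]; linarith
  set M : ℝ := c.re^2 / (4*a) + d.re with hM
  have h1 : Integrable (fun x : ℝ => x ^ (2*n) * Real.exp (-a * x^2)) := by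
    have := integrable_rpow_mul_exp_neg_mul_sq ha'
      (show (-1:ℝ) < ((2*n : ℕ):ℝ) by
        have : (0:ℝ) ≤ ((2*n : ℕ):ℝ) := Nat.cast_nonneg _
        linarith)
    have e : ∀ x : ℝ, x ^ ((2*n : ℕ):ℝ) = x ^ (2*n : ℕ) := fun x => Real.rpow_natCast x (2*n)
    refine this.congr (Filter.Eventually.of_forall fun x => ?_)
    show x ^ ((2*n : ℕ):ℝ) * Real.exp (-a * x^2) = x ^ (2*n) * Real.exp (-a * x^2)
    rw [e x]
  have hg : Integrable (fun x : ℝ =>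
      Real.exp M * (x ^ (2*n) * Real.exp (-a * x^2) + Real.exp (-a * x^2))) :=
    (h1.add (integrable_exp_neg_mul_sq ha')).const_mul _
  apply hg.mono'
  · apply Continuous.aestronglyMeasurable
    exact (Complex.continuous_ofReal.pow n).mul
      (Complex.continuous_exp.comp (by continuity))
  · filter_upwards with x
    have hquad : b.re * x^2 + c.re * x + d.re ≤ -a * x^2 + M := by
      have h0 : 0 ≤ a * (x - c.re/(2*a))^2 := by positivity
      have hexp : a * (x - c.re/(2*a))^2 = a*x^2 - c.re*x + c.re^2/(4*a) := by
        field_simp; ring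
      simp only [hM]; nlinarith [h0, hexp]
    have hpow : |x|^n ≤ x^(2*n) + 1 := by
      rcases le_or_gt |x| 1 with h | h
      · have := pow_le_one₀ (abs_nonneg x) h (n := n)
        nlinarith [pow_nonneg (sq_nonneg x) n, pow_mul x 2 n]
      · have h2 : |x|^n ≤ |x|^(2*n) := pow_le_pow_right₀ h.le (by omega)
        have h3 : |x|^(2*n) = x^(2*n) := by
          rw [pow_mul, _root_.sq_abs x, ← pow_mul]
        nlinarith [h2, h3]
    calc ‖(x:ℂ)^n * Complex.exp (b * x^2 + c * x + d)‖
        = |x|^n * Real.exp (b.re * x^2 + c.re * x + d.re) := by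
          rw [norm_mul, norm_pow, Complex.norm_real, Real.norm_eq_abs,
            Complex.norm_exp, quad_re]
      _ ≤ (x^(2*n) + 1) * Real.exp (-a * x^2 + M) := by
          apply mul_le_mul hpow (Real.exp_le_exp.mpr hquad) (Real.exp_nonneg _)
          nlinarith [pow_nonneg (sq_nonneg x) n, _root_.sq_abs x, pow_mul x 2 n]
      _ = Real.exp M * (x ^ (2*n) * Real.exp (-a * x^2) + Real.exp (-a * x^2)) := by
          rw [Real.exp_add]; ring

/-- Bilateral Laplace transform of the Ricker wavelet
`q(t) = (1 - (α²/2)(t - t₀)²) exp (-(α²/4)(t - t₀)²)`: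
for every complex `s`, `B{q}(s) = -(4√π/α³) · s² · exp ((s/α)² - s t₀)`. -/
theorem bilateral_laplace_ricker (α t₀ : ℝ) (hα : 0 < α) (ht₀ : 0 < t₀) (s : ℂ) :
    ∫ t : ℝ,
        ((1 : ℂ) - (α : ℂ) ^ 2 / 2 * ((t : ℂ) - (t₀ : ℂ)) ^ 2) *
          Complex.exp (-((α : ℂ) ^ 2 / 4) * ((t : ℂ) - (t₀ : ℂ)) ^ 2) *
          Complex.exp (-s * (t : ℂ)) =
      -(4 * (Real.sqrt Real.pi : ℂ) / (α : ℂ) ^ 3) * s ^ 2 *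
        Complex.exp (s ^ 2 / (α : ℂ) ^ 2 - s * (t₀ : ℂ)) := by
  have hα0 : (α:ℂ) ≠ 0 := Complex.ofReal_ne_zero.mpr hα.ne'
  set b : ℂ := -((α:ℂ)^2/4) with hbdef
  set c : ℂ := (α:ℂ)^2*(t₀:ℂ)/2 - s with hcdef
  set d : ℂ := -((α:ℂ)^2*(t₀:ℂ)^2/4) with hddef
  set p : ℂ := -(t₀:ℂ) - 2*s/(α:ℂ)^2 with hpdef
  set K : ℂ := -2*s^2/(α:ℂ)^2 with hKdef
  have hb : b.re < 0 := by
    have : b = ((-(α^2/4) : ℝ) : ℂ) := by rw [hbdef]; push_cast; ring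
    rw [this, Complex.ofReal_re]
    have : 0 < α^2/4 := by positivity
    linarith
  -- the derivative of (p+t)·exp(bt²+ct+d)
  have hderiv : ∀ t : ℝ, HasDerivAt (fun u : ℝ => (p + u) * Complex.exp (b*u^2+c*u+d))
      ((1 + (p + t)*(2*b*t + c)) * Complex.exp (b*(t:ℂ)^2+c*t+d)) t := by
    intro t
    have h1 : HasDerivAt (fun z : ℂ => p + z) 1 (t:ℂ) := (hasDerivAt_id _).const_add p
    have h2 : HasDerivAt (fun z : ℂ => b*z^2+c*z+d) (2*b*t + c) (t:ℂ) := by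
      have := (((hasDerivAt_pow 2 (t:ℂ)).const_mul b).add
        ((hasDerivAt_id (t:ℂ)).const_mul c)).add_const d
      convert this using 1
      · rfl
      · rfl
      · rfl
      · push_cast; ring
    have h4 := (h1.mul h2.cexp).comp_ofReal
    convert h4 using 1
    · rfl
    ring
  -- integrability
  have h0 := ricker_aux_integrable 0 hb c d
  have h1 := ricker_aux_integrable 1 hb c d
  have h2 := ricker_aux_integrable 2 hb c d
  have hF' : Integrable (fun t : ℝ => (1 + (p + t)*(2*b*t + c)) * Complex.exp (b*(t:ℂ)^2+c*t+d)) := by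
    have := ((h0.const_mul (1 + p*c)).add (h1.const_mul (2*b*p + c))).add (h2.const_mul (2*b))
    refine this.congr (Filter.Eventually.of_forall fun t => ?_)
    simp only [Pi.add_apply, pow_zero, pow_one, one_mul]
    ring
  -- pointwise identity
  have hEq : ∀ t : ℝ,
      ((1 : ℂ) - (α : ℂ) ^ 2 / 2 * ((t : ℂ) - (t₀ : ℂ)) ^ 2) *
          Complex.exp (-((α : ℂ) ^ 2 / 4) * ((t : ℂ) - (t₀ : ℂ)) ^ 2) *
          Complex.exp (-s * (t : ℂ)) =
      (1 + (p + t)*(2*b*t + c)) * Complex.exp (b*(t:ℂ)^2+c*t+d)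
        + K * Complex.exp (b*(t:ℂ)^2+c*t+d) := by
    intro t
    have hexp : Complex.exp (-((α : ℂ) ^ 2 / 4) * ((t : ℂ) - (t₀ : ℂ)) ^ 2) *
        Complex.exp (-s * (t : ℂ)) = Complex.exp (b*(t:ℂ)^2+c*t+d) := by
      rw [← Complex.exp_add]
      congr 1
      rw [hbdef, hcdef, hddef]; ring
    rw [mul_assoc, hexp, ← add_mul]
    congr 1
    rw [hpdef, hKdef, hbdef, hcdef]
    field_simp
    ring
  rw [integral_congr_ae (Filter.Eventually.of_forall hEq)]
  rw [integral_add hF' ((integrable_cexp_quadratic' hb c d).const_mul K)]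
  have hzero : ∫ t : ℝ, (1 + (p + t)*(2*b*t + c)) * Complex.exp (b*(t:ℂ)^2+c*t+d) = 0 := by
    have := integral_of_hasDerivAt_of_tendsto hderiv hF'
      (ricker_aux_tendsto_bot b c d p hb) (ricker_aux_tendsto_top b c d p hb)
    simpa using this
  rw [hzero, zero_add, integral_const_mul, integral_cexp_quadratic hb c d]
  -- evaluate constants
  have h2r : ((4*Real.pi/α^2 : ℝ)) ^ ((1:ℝ)/2) = 2*Real.sqrt Real.pi/α := by
    rw [show (4*Real.pi/α^2 : ℝ) = (2*Real.sqrt Real.pi/α)^2 by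
      rw [div_pow, mul_pow, Real.sq_sqrt Real.pi_pos.le]; norm_num]
    rw [← Real.rpow_natCast (2*Real.sqrt Real.pi/α) 2, ← Real.rpow_mul (by positivity)]
    norm_num
  have hsq : ((Real.pi : ℂ) / (-b)) ^ (1/2 : ℂ) = ((2 * Real.sqrt Real.pi / α : ℝ) : ℂ) := by
    have h1 : ((Real.pi : ℂ) / (-b)) = (((4*Real.pi/α^2 : ℝ)) : ℂ) := by
      rw [hbdef]; push_cast; rw [neg_neg]; field_simp
    rw [h1, show (1/2 : ℂ) = (((1:ℝ)/2 : ℝ) : ℂ) by norm_num,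
      ← Complex.ofReal_cpow (by positivity), h2r]
  have hexp2 : d - c^2/(4*b) = s^2/(α:ℂ)^2 - s*(t₀:ℂ) := by
    rw [hddef, hcdef, hbdef]
    have h4 : ((α:ℂ))^2 ≠ 0 := pow_ne_zero _ hα0
    field_simp
    ring
  rw [hsq, hexp2, hKdef]
  push_cast
  field_simp
  ring
end

section
/- For every complex number s, the bilateral Laplace transform of the second derivative of the Ricker wavelet satisfies B{q''}(s) = −(4·√π/α³)·s⁴·exp((s/α)² − s·t₀), i.e. ∫_ℝ (deriv (deriv q))(t)·exp(−s·t) dt = −(4·√π/α³)·s⁴·exp(s²/α² − s·t₀). -/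
open MeasureTheory Filter Set

namespace RickerAux

noncomputable def E (b : ℝ) (s : ℂ) (x : ℝ) : ℂ := Complex.exp (-(b:ℂ) * (x:ℂ) ^ 2 - s * (x:ℂ))

lemma abs_pow_le (k : ℕ) (x : ℝ) : |x| ^ k ≤ k.factorial * Real.exp |x| := by
  have h1 : |x| ^ k / k.factorial ≤ ∑ i ∈ Finset.range (k+1), |x| ^ i / i.factorial :=
    Finset.single_le_sum (f := fun i => |x| ^ i / i.factorial) (fun i _ => by positivity)
      (Finset.self_mem_range_succ k)
  have h2 := Real.sum_le_exp_of_nonneg (abs_nonneg x) (k+1)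
  have hk : (0:ℝ) < k.factorial := by exact_mod_cast k.factorial_pos
  have := h1.trans h2
  rw [div_le_iff₀ hk] at this
  linarith [this, mul_comm (Real.exp |x|) (k.factorial : ℝ)]

lemma norm_E (b : ℝ) (s : ℂ) (k : ℕ) (x : ℝ) :
    ‖(x:ℂ) ^ k * E b s x‖ = |x| ^ k * Real.exp (-b * x ^ 2 - s.re * x) := by
  rw [norm_mul, norm_pow, Complex.norm_real, Real.norm_eq_abs, E,
    Complex.norm_exp]
  congr 1
  have : (-(b:ℂ) * (x:ℂ) ^ 2 - s * (x:ℂ)).re = -b * x ^ 2 - s.re * x := by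
    simp [Complex.sub_re, Complex.mul_re, Complex.ofReal_re, Complex.ofReal_im, pow_two]
  rw [this]

lemma integrable_exp_quad (b : ℝ) (hb : 0 < b) (c : ℝ) :
    Integrable fun x : ℝ => Real.exp (-b * x ^ 2 + c * x) := by
  have h := (integrable_cexp_quadratic (b := (b:ℂ)) (by simpa using hb) (c:ℂ) 0).norm
  refine h.congr (Filter.Eventually.of_forall fun x => ?_)
  show ‖Complex.exp _‖ = _
  have harg : -(b:ℂ) * (x:ℂ) ^ 2 + (c:ℂ) * (x:ℂ) + 0 = ((-b * x ^ 2 + c * x : ℝ) : ℂ) := by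
    push_cast; ring
  rw [harg, Complex.norm_exp_ofReal]

lemma exp_abs_le (x : ℝ) : Real.exp |x| ≤ Real.exp x + Real.exp (-x) := by
  rcases abs_cases x with ⟨h, _⟩ | ⟨h, _⟩ <;> rw [h] <;>
    nlinarith [Real.exp_pos x, Real.exp_pos (-x)]

lemma integrable_pow_E (b : ℝ) (hb : 0 < b) (s : ℂ) (k : ℕ) :
    Integrable fun x : ℝ => (x:ℂ) ^ k * E b s x := by
  have hbound : Integrable fun x : ℝ => (k.factorial : ℝ) *
      (Real.exp (-b * x ^ 2 + (1 - s.re) * x) + Real.exp (-b * x ^ 2 + (-1 - s.re) * x)) :=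
    ((integrable_exp_quad b hb _).add (integrable_exp_quad b hb _)).const_mul _
  refine hbound.mono' ?_ (Filter.Eventually.of_forall fun x => ?_)
  · apply Continuous.aestronglyMeasurable
    unfold E
    fun_prop
  · rw [norm_E]
    have h1 : |x| ^ k ≤ k.factorial * (Real.exp x + Real.exp (-x)) :=
      (abs_pow_le k x).trans (by
        have := exp_abs_le x
        have hk : (0:ℝ) ≤ k.factorial := by positivity
        nlinarith)
    calc |x| ^ k * Real.exp (-b * x ^ 2 - s.re * x)
        ≤ (k.factorial * (Real.exp x + Real.exp (-x))) * Real.exp (-b * x ^ 2 - s.re * x) :=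
          mul_le_mul_of_nonneg_right h1 (Real.exp_pos _).le
      _ = (k.factorial : ℝ) *
          (Real.exp (-b * x ^ 2 + (1 - s.re) * x) + Real.exp (-b * x ^ 2 + (-1 - s.re) * x)) := by
          rw [mul_assoc, add_mul, ← Real.exp_add, ← Real.exp_add]
          ring_nf

lemma tendsto_pow_exp_quad_atTop (b : ℝ) (hb : 0 < b) (c : ℝ) (k : ℕ) :
    Tendsto (fun x : ℝ => |x| ^ k * Real.exp (-b * x ^ 2 + c * x)) atTop (nhds 0) := by
  have hlin : Tendsto (fun x : ℝ => -b * x + (c + 1)) atTop atBot := by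
    apply tendsto_atBot_add_const_right
    have h1 : Tendsto (fun x : ℝ => b * x) atTop atTop :=
      Tendsto.const_mul_atTop hb tendsto_id
    have h2 := tendsto_neg_atTop_atBot.comp h1
    refine h2.congr fun x => by simp [Function.comp, neg_mul]
  have hexp : Tendsto (fun x : ℝ => -b * x ^ 2 + (c + 1) * x) atTop atBot := by
    have h1 : Tendsto (fun x : ℝ => x * (-b * x + (c + 1))) atTop atBot :=
      Tendsto.atTop_mul_atBot₀ tendsto_id hlin
    refine h1.congr fun x => by ring
  have h0 : Tendsto (fun x : ℝ => (k.factorial : ℝ) * Real.exp (-b * x ^ 2 + (c + 1) * x))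
      atTop (nhds 0) := by
    simpa using (Real.tendsto_exp_atBot.comp hexp).const_mul (k.factorial : ℝ)
  apply squeeze_zero' (Filter.Eventually.of_forall fun x => by positivity) ?_ h0
  filter_upwards [eventually_ge_atTop (0:ℝ)] with x hx
  have h1 : |x| ^ k ≤ k.factorial * Real.exp x := by
    have h := abs_pow_le k x
    rw [abs_of_nonneg hx] at h ⊢
    exact h
  calc |x| ^ k * Real.exp (-b * x ^ 2 + c * x)
      ≤ (k.factorial * Real.exp x) * Real.exp (-b * x ^ 2 + c * x) :=
        mul_le_mul_of_nonneg_right h1 (Real.exp_pos _).le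
    _ = (k.factorial : ℝ) * Real.exp (-b * x ^ 2 + (c + 1) * x) := by
        rw [mul_assoc, ← Real.exp_add]; ring_nf

lemma tendsto_pow_exp_quad_atBot (b : ℝ) (hb : 0 < b) (c : ℝ) (k : ℕ) :
    Tendsto (fun x : ℝ => |x| ^ k * Real.exp (-b * x ^ 2 + c * x)) atBot (nhds 0) := by
  have h := (tendsto_pow_exp_quad_atTop b hb (-c) k).comp tendsto_neg_atBot_atTop
  refine h.congr fun x => ?_
  simp only [Function.comp]
  rw [abs_neg]
  ring_nf

lemma tendsto_pow_E_atTop (b : ℝ) (hb : 0 < b) (s : ℂ) (k : ℕ) :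
    Tendsto (fun x : ℝ => (x:ℂ) ^ k * E b s x) atTop (nhds 0) := by
  rw [tendsto_zero_iff_norm_tendsto_zero]
  refine (tendsto_pow_exp_quad_atTop b hb (-s.re) k).congr fun x => ?_
  rw [norm_E]; ring_nf

lemma tendsto_pow_E_atBot (b : ℝ) (hb : 0 < b) (s : ℂ) (k : ℕ) :
    Tendsto (fun x : ℝ => (x:ℂ) ^ k * E b s x) atBot (nhds 0) := by
  rw [tendsto_zero_iff_norm_tendsto_zero]
  refine (tendsto_pow_exp_quad_atBot b hb (-s.re) k).congr fun x => ?_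
  rw [norm_E]; ring_nf

lemma integral_deriv_zero (b : ℝ) (hb : 0 < b) (s : ℂ) (k : ℕ) :
    ∫ x : ℝ, ((k:ℂ) * ((x:ℂ) ^ (k-1) * E b s x) -
      (2 * (b:ℂ) * ((x:ℂ) ^ (k+1) * E b s x) + s * ((x:ℂ) ^ k * E b s x))) = 0 := by
  set F : ℝ → ℂ := fun x => (x:ℂ) ^ k * E b s x with hF
  set F' : ℝ → ℂ := fun x => (k:ℂ) * ((x:ℂ) ^ (k-1) * E b s x) -
      (2 * (b:ℂ) * ((x:ℂ) ^ (k+1) * E b s x) + s * ((x:ℂ) ^ k * E b s x)) with hF'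
  have hderiv : ∀ x : ℝ, HasDerivAt F (F' x) x := by
    intro x
    have hinner : HasDerivAt (fun z : ℂ => -(b:ℂ) * z ^ 2 - s * z)
        (-(b:ℂ) * (2 * (x:ℂ) ^ 1) - s * 1) (x:ℂ) :=
      (((hasDerivAt_pow 2 (x:ℂ)).const_mul (-(b:ℂ))).sub
        ((hasDerivAt_id (x:ℂ)).const_mul s))
    have hexp := hinner.cexp
    have hH := (hasDerivAt_pow k (x:ℂ)).mul hexp
    have h := hH.comp_ofReal
    refine h.congr_deriv ?_
    simp only [hF', E]
    ring
  have hint : Integrable F' :=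
    ((integrable_pow_E b hb s (k-1)).const_mul _).sub
      (((integrable_pow_E b hb s (k+1)).const_mul _).add
        ((integrable_pow_E b hb s k).const_mul _))
  have h1 : ∫ x in Ioi (0:ℝ), F' x = 0 - F 0 :=
    integral_Ioi_of_hasDerivAt_of_tendsto' (fun x _ => hderiv x) hint.integrableOn
      (tendsto_pow_E_atTop b hb s k)
  have h2 : ∫ x in Iic (0:ℝ), F' x = F 0 - 0 :=
    integral_Iic_of_hasDerivAt_of_tendsto' (fun x _ => hderiv x) hint.integrableOn
      (tendsto_pow_E_atBot b hb s k)
  rw [← intervalIntegral.integral_Iic_add_Ioi (b := (0:ℝ)) hint.integrableOn hint.integrableOn,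
    h1, h2]
  ring

lemma moment_rec (b : ℝ) (hb : 0 < b) (s : ℂ) (k : ℕ) :
    2 * (b:ℂ) * ∫ x : ℝ, (x:ℂ) ^ (k+1) * E b s x =
      (k:ℂ) * (∫ x : ℝ, (x:ℂ) ^ (k-1) * E b s x) - s * ∫ x : ℝ, (x:ℂ) ^ k * E b s x := by
  have h := integral_deriv_zero b hb s k
  have hA : Integrable fun x : ℝ => (k:ℂ) * ((x:ℂ) ^ (k-1) * E b s x) :=
    (integrable_pow_E b hb s (k-1)).const_mul _
  have hB : Integrable fun x : ℝ => 2 * (b:ℂ) * ((x:ℂ) ^ (k+1) * E b s x) :=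
    (integrable_pow_E b hb s (k+1)).const_mul _
  have hC : Integrable fun x : ℝ => s * ((x:ℂ) ^ k * E b s x) :=
    (integrable_pow_E b hb s k).const_mul _
  have eS := integral_sub hA (hB.add hC)
  simp only [Pi.add_apply] at eS
  have eBC := integral_add hB hC
  have eA := integral_const_mul (μ := (volume : Measure ℝ)) (k:ℂ)
    (fun x : ℝ => (x:ℂ) ^ (k-1) * E b s x)
  have eB := integral_const_mul (μ := (volume : Measure ℝ)) (2 * (b:ℂ))
    (fun x : ℝ => (x:ℂ) ^ (k+1) * E b s x)
  have eC := integral_const_mul (μ := (volume : Measure ℝ)) s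
    (fun x : ℝ => (x:ℂ) ^ k * E b s x)
  linear_combination -eB + eA - eC - eBC + eS - h

end RickerAux

open RickerAux

/-- Bilateral Laplace transform of the second derivative of the Ricker wavelet
`q(t) = (1 - (α²/2)(t - t₀)²) exp (-(α²/4)(t - t₀)²)`:
for every complex `s`, `B{q''}(s) = -(4√π/α³) · s⁴ · exp ((s/α)² - s t₀)`. -/
theorem bilateral_laplace_ricker_second_deriv (α t₀ : ℝ) (hα : 0 < α) (ht₀ : 0 < t₀) (s : ℂ) :
    ∫ t : ℝ,
        (deriv (deriv (fun u : ℝ =>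
            (1 - α ^ 2 / 2 * (u - t₀) ^ 2) * Real.exp (-(α ^ 2 / 4) * (u - t₀) ^ 2))) t : ℂ) *
          Complex.exp (-s * (t : ℂ)) =
      -(4 * (Real.sqrt Real.pi : ℂ) / (α : ℂ) ^ 3) * s ^ 4 *
        Complex.exp (s ^ 2 / (α : ℂ) ^ 2 - s * (t₀ : ℂ)) := by
  have hb : (0:ℝ) < α ^ 2 / 4 := by positivity
  have hβ : (α:ℂ) ≠ 0 := by exact_mod_cast hα.ne'
  set q : ℝ → ℝ := fun u : ℝ =>
    (1 - α ^ 2 / 2 * (u - t₀) ^ 2) * Real.exp (-(α ^ 2 / 4) * (u - t₀) ^ 2) with hqdef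
  -- first derivative
  have hd1 : ∀ t : ℝ, HasDerivAt q
      ((α^4/4*(t-t₀)^3 - 3*α^2/2*(t-t₀)) * Real.exp (-(α^2/4)*(t-t₀)^2)) t := by
    intro t
    have hx : HasDerivAt (fun u : ℝ => u - t₀) 1 t := (hasDerivAt_id t).sub_const t₀
    have hx2 : HasDerivAt (fun u : ℝ => (u - t₀)^2) (2*(t-t₀)^1*1) t := hx.pow 2
    have hp : HasDerivAt (fun u : ℝ => 1 - α^2/2*(u-t₀)^2) (-(α^2/2*(2*(t-t₀)^1*1))) t :=
      HasDerivAt.const_sub 1 (hx2.const_mul (α^2/2))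
    have he : HasDerivAt (fun u : ℝ => Real.exp (-(α^2/4)*(u-t₀)^2))
        (Real.exp (-(α^2/4)*(t-t₀)^2) * (-(α^2/4)*(2*(t-t₀)^1*1))) t :=
      (hx2.const_mul (-(α^2/4))).exp
    have h := hp.mul he
    rw [hqdef]
    refine h.congr_deriv ?_
    ring
  -- second derivative
  have hd2 : ∀ t : ℝ, HasDerivAt
      (fun t : ℝ => (α^4/4*(t-t₀)^3 - 3*α^2/2*(t-t₀)) * Real.exp (-(α^2/4)*(t-t₀)^2))
      ((-(α^6/8)*(t-t₀)^4 + 3*α^4/2*(t-t₀)^2 - 3*α^2/2) * Real.exp (-(α^2/4)*(t-t₀)^2)) t := by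
    intro t
    have hx : HasDerivAt (fun u : ℝ => u - t₀) 1 t := (hasDerivAt_id t).sub_const t₀
    have hx2 : HasDerivAt (fun u : ℝ => (u - t₀)^2) (2*(t-t₀)^1*1) t := hx.pow 2
    have hx3 : HasDerivAt (fun u : ℝ => (u - t₀)^3) (3*(t-t₀)^2*1) t := hx.pow 3
    have hp : HasDerivAt (fun u : ℝ => α^4/4*(u-t₀)^3 - 3*α^2/2*(u-t₀))
        (α^4/4*(3*(t-t₀)^2*1) - 3*α^2/2*1) t :=
      (hx3.const_mul (α^4/4)).sub (hx.const_mul (3*α^2/2))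
    have he : HasDerivAt (fun u : ℝ => Real.exp (-(α^2/4)*(u-t₀)^2))
        (Real.exp (-(α^2/4)*(t-t₀)^2) * (-(α^2/4)*(2*(t-t₀)^1*1))) t :=
      (hx2.const_mul (-(α^2/4))).exp
    have h := hp.mul he
    refine h.congr_deriv ?_
    ring
  -- identify the complex-valued integrand function
  have hQeq : (fun u : ℝ => (1 - (α:ℂ) ^ 2 / 2 * ((u:ℂ) - (t₀:ℂ)) ^ 2) *
      (Real.exp (-(α ^ 2 / 4) * (u - t₀) ^ 2) : ℂ)) = fun u : ℝ => ((q u : ℝ) : ℂ) := by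
    funext u
    rw [hqdef]
    push_cast
    ring
  rw [hQeq]
  have hDD : deriv (deriv (fun u : ℝ => ((q u : ℝ) : ℂ))) = fun t : ℝ =>
      (((-(α^6/8)*(t-t₀)^4 + 3*α^4/2*(t-t₀)^2 - 3*α^2/2) *
        Real.exp (-(α^2/4)*(t-t₀)^2) : ℝ) : ℂ) := by
    have h1 : deriv (fun u : ℝ => ((q u : ℝ) : ℂ)) = fun t : ℝ =>
        (((α^4/4*(t-t₀)^3 - 3*α^2/2*(t-t₀)) * Real.exp (-(α^2/4)*(t-t₀)^2) : ℝ) : ℂ) :=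
      funext fun t => ((hd1 t).ofReal_comp).deriv
    rw [h1]
    exact funext fun t => ((hd2 t).ofReal_comp).deriv
  rw [hDD]
  -- shift the variable
  have hshift := MeasureTheory.integral_add_right_eq_self (μ := (volume : Measure ℝ))
    (fun t : ℝ => (((-(α^6/8)*(t-t₀)^4 + 3*α^4/2*(t-t₀)^2 - 3*α^2/2) *
        Real.exp (-(α^2/4)*(t-t₀)^2) : ℝ) : ℂ) * Complex.exp (-s * (t:ℂ))) t₀
  rw [← hshift]
  -- pointwise rewriting of the integrand
  have hptwise : ∀ x : ℝ,
      (((-(α^6/8)*(x + t₀-t₀)^4 + 3*α^4/2*(x + t₀-t₀)^2 - 3*α^2/2) *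
        Real.exp (-(α^2/4)*(x + t₀-t₀)^2) : ℝ) : ℂ) * Complex.exp (-s * ((x + t₀ : ℝ):ℂ)) =
        Complex.exp (-(s * (t₀:ℂ))) *
          (-((α:ℂ)^6/8) * ((x:ℂ)^4 * E (α^2/4) s x) + 3*(α:ℂ)^4/2 * ((x:ℂ)^2 * E (α^2/4) s x) +
            -(3*(α:ℂ)^2/2) * E (α^2/4) s x) := by
    intro x
    rw [show x + t₀ - t₀ = x from by ring]
    have hmerge : Complex.exp ((( -(α^2/4)*x^2 : ℝ)):ℂ) * Complex.exp (-s * ((x + t₀ : ℝ):ℂ)) =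
        Complex.exp (-(s * (t₀:ℂ))) * E (α^2/4) s x := by
      rw [E, ← Complex.exp_add, ← Complex.exp_add]
      congr 1
      push_cast
      ring
    push_cast [Complex.ofReal_exp] at hmerge ⊢
    linear_combination
      ((-(((α:ℂ))^6/8)*(x:ℂ)^4 + 3*((α:ℂ))^4/2*(x:ℂ)^2 - 3*((α:ℂ))^2/2)) * hmerge
  rw [show (fun x : ℝ =>
      (((-(α^6/8)*(x + t₀-t₀)^4 + 3*α^4/2*(x + t₀-t₀)^2 - 3*α^2/2) *
        Real.exp (-(α^2/4)*(x + t₀-t₀)^2) : ℝ) : ℂ) * Complex.exp (-s * ((x + t₀ : ℝ):ℂ))) =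
      (fun x : ℝ => Complex.exp (-(s * (t₀:ℂ))) *
          (-((α:ℂ)^6/8) * ((x:ℂ)^4 * E (α^2/4) s x) + 3*(α:ℂ)^4/2 * ((x:ℂ)^2 * E (α^2/4) s x) +
            -(3*(α:ℂ)^2/2) * E (α^2/4) s x)) from funext hptwise]
  -- split the integral
  have hg4 : Integrable fun x : ℝ => -((α:ℂ)^6/8) * ((x:ℂ)^4 * E (α^2/4) s x) :=
    (integrable_pow_E _ hb s 4).const_mul _
  have hg2 : Integrable fun x : ℝ => 3*(α:ℂ)^4/2 * ((x:ℂ)^2 * E (α^2/4) s x) :=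
    (integrable_pow_E _ hb s 2).const_mul _
  have hE0int : Integrable fun x : ℝ => E (α^2/4) s x := by
    simpa using integrable_pow_E _ hb s 0
  have hg0 : Integrable fun x : ℝ => -(3*(α:ℂ)^2/2) * E (α^2/4) s x :=
    hE0int.const_mul _
  have eT := integral_const_mul (μ := (volume : Measure ℝ)) (Complex.exp (-(s * (t₀:ℂ))))
    (fun x : ℝ => -((α:ℂ)^6/8) * ((x:ℂ)^4 * E (α^2/4) s x) +
      3*(α:ℂ)^4/2 * ((x:ℂ)^2 * E (α^2/4) s x) + -(3*(α:ℂ)^2/2) * E (α^2/4) s x)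
  have eS1 := integral_add (hg4.add hg2) hg0
  simp only [Pi.add_apply] at eS1
  have eS2 := integral_add hg4 hg2
  have e4 := integral_const_mul (μ := (volume : Measure ℝ)) (-((α:ℂ)^6/8))
    (fun x : ℝ => (x:ℂ)^4 * E (α^2/4) s x)
  have e2 := integral_const_mul (μ := (volume : Measure ℝ)) (3*(α:ℂ)^4/2)
    (fun x : ℝ => (x:ℂ)^2 * E (α^2/4) s x)
  have e0 := integral_const_mul (μ := (volume : Measure ℝ)) (-(3*(α:ℂ)^2/2))
    (fun x : ℝ => E (α^2/4) s x)
  -- moment recurrences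
  have hbc : ((α^2/4 : ℝ):ℂ) = (α:ℂ)^2/4 := by push_cast; ring
  have R0 := moment_rec _ hb s 0
  have R1 := moment_rec _ hb s 1
  have R2 := moment_rec _ hb s 2
  have R3 := moment_rec _ hb s 3
  norm_num at R0 R1 R2 R3
  -- value of the 0-th moment
  have hM0 : ∫ x : ℝ, E (α^2/4) s x =
      2*(Real.sqrt Real.pi:ℂ)/(α:ℂ) * Complex.exp (s^2/(α:ℂ)^2) := by
    have harg : ∀ x : ℝ, E (α^2/4) s x =
        Complex.exp (-((α^2/4 : ℝ):ℂ) * (x:ℂ)^2 + (-s)*(x:ℂ) + 0) := by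
      intro x
      rw [E]
      ring_nf
    simp only [harg]
    rw [integral_cexp_quadratic (show (-(((α^2/4 : ℝ)):ℂ)).re < 0 by rw [Complex.neg_re, Complex.ofReal_re]; linarith) (-s) 0, neg_neg]
    have h1 : ((Real.pi:ℂ) / ((α^2/4 : ℝ):ℂ)) ^ (1/2 : ℂ) =
        2*(Real.sqrt Real.pi:ℂ)/(α:ℂ) := by
      have e0 : (Real.pi:ℂ)/((α^2/4 : ℝ):ℂ) = ((Real.pi/(α^2/4) : ℝ):ℂ) := by push_cast; ring
      rw [e0, show (1/2:ℂ) = ((1/2:ℝ):ℂ) from by norm_num,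
        ← Complex.ofReal_cpow (by positivity) (1/2:ℝ)]
      have h2 : (Real.pi/(α^2/4)) ^ ((1:ℝ)/2) = 2*Real.sqrt Real.pi/α := by
        rw [← Real.sqrt_eq_rpow]
        rw [show Real.pi/(α^2/4) = (2*Real.sqrt Real.pi/α)^2 from by
          rw [div_pow, mul_pow, Real.sq_sqrt Real.pi_nonneg]
          field_simp
          ring]
        exact Real.sqrt_sq (by positivity)
      rw [h2]
      push_cast
      ring
    rw [h1]
    congr 1
    rw [hbc]
    field_simp
    ring
  -- solve for the moments
  have hM1 : (α:ℂ)^2 * ∫ x : ℝ, (x:ℂ) * E (α^2/4) s x =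
      -2*s * ∫ x : ℝ, E (α^2/4) s x := by
    linear_combination 2 * R0
  have hM2 : (α:ℂ)^4 * ∫ x : ℝ, (x:ℂ)^2 * E (α^2/4) s x =
      (2*(α:ℂ)^2 + 4*s^2) * ∫ x : ℝ, E (α^2/4) s x := by
    linear_combination 2*(α:ℂ)^2 * R1 - 2*s*hM1
  have hM3 : (α:ℂ)^6 * ∫ x : ℝ, (x:ℂ)^3 * E (α^2/4) s x =
      (-12*s*(α:ℂ)^2 - 8*s^3) * ∫ x : ℝ, E (α^2/4) s x := by
    linear_combination 2*(α:ℂ)^4 * R2 + 4*(α:ℂ)^2 * hM1 - 2*s*hM2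
  have hM4 : (α:ℂ)^8 * ∫ x : ℝ, (x:ℂ)^4 * E (α^2/4) s x =
      (12*(α:ℂ)^4 + 48*s^2*(α:ℂ)^2 + 16*s^4) * ∫ x : ℝ, E (α^2/4) s x := by
    linear_combination 2*(α:ℂ)^6 * R3 + 6*(α:ℂ)^2 * hM2 - 2*s*hM3
  -- final assembly
  have hexp : Complex.exp (s ^ 2 / (α:ℂ) ^ 2 - s * (t₀:ℂ)) =
      Complex.exp (s^2/(α:ℂ)^2) * Complex.exp (-(s * (t₀:ℂ))) := by
    rw [← Complex.exp_add]
    ring_nf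
  have hM0' : (α:ℂ) * ∫ x : ℝ, E (α^2/4) s x =
      2*(Real.sqrt Real.pi:ℂ) * Complex.exp (s^2/(α:ℂ)^2) := by
    rw [hM0]
    field_simp
  rw [eT, eS1, eS2, e4, e2, e0, hM0, hexp]
  field_simp
  linear_combination (-2*(α:ℂ)) * hM4
    + (24*(α:ℂ)^3) * hM2
    + (24*(α:ℂ)^4 - 32*s^4) * hM0'
end

section
/- There exists a constant C > 0 such that for all α > 0, μ > 0 and t₀ with t₀ ≥ 2·(α + μ)/α², the weighted tail of the second derivative of the Ricker wavelet satisfies ∫_{−∞}^0 |q''(t)|·exp(−μ·t) dt ≤ C·α·exp(−(α·t₀/2 − 1)²). -/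
open MeasureTheory Real Set Filter Topology

section helpers
lemma ricker_deriv (a t₀ : ℝ) :
    deriv (fun u : ℝ => (1 - 2*a*(u - t₀)^2) * Real.exp (-a*(u - t₀)^2))
      = fun x => Real.exp (-a*(x - t₀)^2) * (4*a^2*(x - t₀)^3 - 6*a*(x - t₀)) := by
  funext x
  have h1 : HasDerivAt (fun u : ℝ => u - t₀) 1 x := (hasDerivAt_id x).sub_const t₀
  have h2 : HasDerivAt (fun u : ℝ => (u - t₀)^2) (2*(x - t₀)) x := by
    simpa using h1.fun_pow 2
  have h3 : HasDerivAt (fun u : ℝ => Real.exp (-a*(u - t₀)^2))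
      (Real.exp (-a*(x - t₀)^2) * (-a*(2*(x - t₀)))) x := (h2.const_mul (-a)).exp
  have h4 : HasDerivAt (fun u : ℝ => 1 - 2*a*(u - t₀)^2) (-(2*a*(2*(x - t₀)))) x :=
    (h2.const_mul (2*a)).const_sub 1
  have h5 := (h4.fun_mul h3).deriv
  rw [h5]; ring

lemma ricker_deriv2 (a t₀ : ℝ) :
    deriv (fun x : ℝ => Real.exp (-a*(x - t₀)^2) * (4*a^2*(x - t₀)^3 - 6*a*(x - t₀)))
      = fun x => Real.exp (-a*(x - t₀)^2) * (-(8*a^3)*(x - t₀)^4 + 24*a^2*(x - t₀)^2 - 6*a) := by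
  funext x
  have h1 : HasDerivAt (fun u : ℝ => u - t₀) 1 x := (hasDerivAt_id x).sub_const t₀
  have h2 : HasDerivAt (fun u : ℝ => (u - t₀)^2) (2*(x - t₀)) x := by
    simpa using h1.fun_pow 2
  have h2' : HasDerivAt (fun u : ℝ => (u - t₀)^3) (3*(x - t₀)^2) x := by
    simpa using h1.fun_pow 3
  have h3 : HasDerivAt (fun u : ℝ => Real.exp (-a*(u - t₀)^2))
      (Real.exp (-a*(x - t₀)^2) * (-a*(2*(x - t₀)))) x := (h2.const_mul (-a)).exp
  have h4 : HasDerivAt (fun u : ℝ => 4*a^2*(u - t₀)^3 - 6*a*(u - t₀))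
      (4*a^2*(3*(x - t₀)^2) - 6*a*1) x := (h2'.const_mul (4*a^2)).sub (h1.const_mul (6*a))
  have h5 := (h3.fun_mul h4).deriv
  rw [h5]; ring

lemma exp_mul_integrableOn_Iic {c : ℝ} (hc : 0 < c) :
    IntegrableOn (fun x : ℝ => Real.exp (c * x)) (Set.Iic (0:ℝ)) := by
  have hD : ∀ x : ℝ, HasDerivAt (fun y : ℝ => Real.exp (c * y) / c) (Real.exp (c * x)) x := by
    intro x
    have := (((hasDerivAt_id x).const_mul c).exp).div_const c
    simpa [mul_comm, mul_div_assoc, mul_div_cancel_left₀ _ hc.ne'] using this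
  refine integrableOn_Iic_of_intervalIntegral_norm_bounded (1/c) 0
    (fun y => ((Real.continuous_exp.comp (continuous_const.mul continuous_id)).integrableOn_Ioc)) tendsto_id ?_
  filter_upwards [Iic_mem_atBot (0:ℝ)] with y hy
  have hint : ∫ x in y..0, Real.exp (c * x) = Real.exp (c * 0) / c - Real.exp (c * y) / c := by
    exact intervalIntegral.integral_eq_sub_of_hasDerivAt (fun x _ => hD x)
      ((Real.continuous_exp.comp (continuous_const.mul continuous_id)).intervalIntegrable _ _)
  have : ∀ x, ‖Real.exp (c * x)‖ = Real.exp (c * x) := fun x => norm_of_nonneg (Real.exp_pos _).le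
  simp only [this, id]
  rw [hint, mul_zero, Real.exp_zero]
  have : 0 < Real.exp (c*y) := Real.exp_pos _
  rw [div_sub_div_same, one_div, div_le_iff₀ hc, inv_mul_cancel₀ hc.ne']
  nlinarith

lemma exp_mul_integral_Iic {c : ℝ} (hc : 0 < c) :
    ∫ x in Set.Iic (0:ℝ), Real.exp (c * x) = 1 / c := by
  have hD : ∀ x : ℝ, HasDerivAt (fun y : ℝ => Real.exp (c * y) / c) (Real.exp (c * x)) x := by
    intro x
    have := (((hasDerivAt_id x).const_mul c).exp).div_const c
    simpa [mul_comm, mul_div_assoc, mul_div_cancel_left₀ _ hc.ne'] using this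
  have htend : Tendsto (fun y : ℝ => Real.exp (c * y) / c) atBot (𝓝 0) := by
    have h1 : Tendsto (fun y : ℝ => c * y) atBot atBot :=
      Tendsto.const_mul_atBot hc tendsto_id
    have := (Real.tendsto_exp_atBot.comp h1).div_const c
    simpa using this
  have := integral_Iic_of_hasDerivAt_of_tendsto' (a := 0) (fun x _ => hD x)
    (exp_mul_integrableOn_Iic hc) htend
  simpa using this
end helpers

set_option maxHeartbeats 2000000 in
/-- Weighted tail bound for the second derivative of the Ricker wavelet
`q(t) = (1 - (α²/2)(t - t₀)²) exp (-(α²/4)(t - t₀)²)`: there is a constant `C > 0` such that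
for all `α > 0`, `μ > 0` and `t₀ ≥ 2(α + μ)/α²`,
`∫_{-∞}^0 |q''(t)| exp (-μ t) dt ≤ C · α · exp (-(α t₀/2 - 1)²)`. -/
theorem ricker_second_deriv_weighted_tail :
    ∃ C : ℝ, 0 < C ∧
      ∀ (α μ t₀ : ℝ), 0 < α → 0 < μ → 2 * (α + μ) / α ^ 2 ≤ t₀ →
        (∫ t in Set.Iic (0 : ℝ),
            |deriv (deriv (fun u : ℝ =>
                (1 - α ^ 2 / 2 * (u - t₀) ^ 2) * Real.exp (-(α ^ 2 / 4) * (u - t₀) ^ 2))) t| *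
              Real.exp (-μ * t)) ≤
          C * α * Real.exp (-(α * t₀ / 2 - 1) ^ 2) := by
  refine ⟨30000, by norm_num, ?_⟩
  intro α μ t₀ hα hμ ht₀
  have ha : (0:ℝ) < α^2/4 := by positivity
  have h2 : 2*(α+μ) ≤ t₀ * α^2 := by
    rw [div_le_iff₀ (by positivity)] at ht₀; linarith
  have ht₀pos : 0 < t₀ := by nlinarith
  have hfun : (fun u : ℝ => (1 - α ^ 2 / 2 * (u - t₀) ^ 2) * Real.exp (-(α ^ 2 / 4) * (u - t₀) ^ 2))
      = (fun u : ℝ => (1 - 2*(α^2/4)*(u - t₀)^2) * Real.exp (-(α^2/4)*(u - t₀)^2)) := by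
    funext u; ring_nf
  rw [hfun]
  simp only [ricker_deriv, ricker_deriv2]
  set M : ℝ := (α^2/4) * (310 + 48*((α^2/4)*t₀^2) + 64*((α^2/4)*t₀^2)^2)
      * Real.exp (-((α^2/4)*t₀^2)) with hM
  have hMpos : 0 < M := by positivity
  clear_value M
  -- pointwise bound
  have hbound : ∀ t ∈ Iic (0:ℝ),
      |Real.exp (-(α^2/4)*(t - t₀)^2) *
          (-(8*(α^2/4)^3)*(t - t₀)^4 + 24*(α^2/4)^2*(t - t₀)^2 - 6*(α^2/4))| * Real.exp (-μ*t)
        ≤ M * Real.exp (α*t) := by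
    intro t ht
    rw [mem_Iic] at ht
    set a : ℝ := α^2/4 with hadef
    have haa : 0 < a := ha
    have hkey : 0 ≤ 2*a*t₀ - μ - α := by rw [hadef]; nlinarith
    clear_value a
    have hs2 : (t - t₀)^2 ≤ 2*t^2 + 2*t₀^2 := by nlinarith [sq_nonneg (t + t₀)]
    have hs4 : (t - t₀)^4 ≤ 8*t^4 + 8*t₀^4 := by
      have h' : ((t - t₀)^2)^2 ≤ (2*t^2 + 2*t₀^2)^2 :=
        pow_le_pow_left₀ (sq_nonneg _) hs2 2
      nlinarith [sq_nonneg (t^2 - t₀^2)]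
    have hexp : Real.exp (-a*(t - t₀)^2) * Real.exp (-μ*t)
        ≤ Real.exp (-(a*t₀^2)) * (Real.exp (-(a*t^2)) * Real.exp (α*t)) := by
      rw [← Real.exp_add, ← Real.exp_add, ← Real.exp_add]
      apply Real.exp_le_exp.mpr
      have h3 : (2*a*t₀ - μ - α) * t ≤ 0 :=
        mul_nonpos_of_nonneg_of_nonpos hkey ht
      nlinarith [h3]
    have hp := Real.exp_pos (a*t^2)
    have hE0 : (0:ℝ) < Real.exp (-(a*t^2)) := Real.exp_pos _
    have hE1 : Real.exp (-(a*t^2)) ≤ 1 := by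
      rw [Real.exp_le_one_iff]; nlinarith [sq_nonneg t]
    have hx1 : a*t^2 * Real.exp (-(a*t^2)) ≤ 1 := by
      rw [Real.exp_neg, ← div_eq_mul_inv, div_le_one hp]
      linarith [Real.add_one_le_exp (a*t^2)]
    have hx2 : (a*t^2)^2 * Real.exp (-(a*t^2)) ≤ 4 := by
      rw [Real.exp_neg, ← div_eq_mul_inv, div_le_iff₀ hp]
      have h := Real.add_one_le_exp (a*t^2/2)
      have hsq : Real.exp (a*t^2/2) * Real.exp (a*t^2/2) = Real.exp (a*t^2) := by
        rw [← Real.exp_add]; ring_nf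
      nlinarith [mul_self_le_mul_self (by positivity : (0:ℝ) ≤ a*t^2/2 + 1) h, sq_nonneg t]
    have hpoly : (8*a^3*(t - t₀)^4 + 24*a^2*(t - t₀)^2 + 6*a) * Real.exp (-(a*t^2))
        ≤ a * (310 + 48*(a*t₀^2) + 64*(a*t₀^2)^2) := by
      have e1 := mul_le_mul_of_nonneg_left hx2 (show (0:ℝ) ≤ 64*a by positivity)
      have e2 := mul_le_mul_of_nonneg_left hx1 (show (0:ℝ) ≤ 48*a by positivity)
      have e3 := mul_le_mul_of_nonneg_left hE1 (show (0:ℝ) ≤ 6*a by positivity)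
      have e4 := mul_le_mul_of_nonneg_left hE1 (show (0:ℝ) ≤ 64*a^3*t₀^4 by positivity)
      have e5 := mul_le_mul_of_nonneg_left hE1 (show (0:ℝ) ≤ 48*a^2*t₀^2 by positivity)
      have e6 := mul_le_mul_of_nonneg_left (mul_le_mul_of_nonneg_right hs4 hE0.le)
        (show (0:ℝ) ≤ 8*a^3 by positivity)
      have e7 := mul_le_mul_of_nonneg_left (mul_le_mul_of_nonneg_right hs2 hE0.le)
        (show (0:ℝ) ≤ 24*a^2 by positivity)
      linarith [e1, e2, e3, e4, e5, e6, e7]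
    have hPabs : |(-(8*a^3)*(t - t₀)^4 + 24*a^2*(t - t₀)^2 - 6*a)|
        ≤ 8*a^3*(t - t₀)^4 + 24*a^2*(t - t₀)^2 + 6*a := by
      have k1 : 0 ≤ a^3*(t - t₀)^4 := mul_nonneg (pow_pos haa 3).le (by positivity)
      have k2 : 0 ≤ a^2*(t - t₀)^2 := mul_nonneg (pow_pos haa 2).le (sq_nonneg _)
      rw [abs_le]
      constructor
      · linarith
      · linarith
    rw [abs_mul, abs_of_pos (Real.exp_pos _)]
    have hSnn : (0:ℝ) ≤ 8*a^3*(t - t₀)^4 + 24*a^2*(t - t₀)^2 + 6*a := by positivity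
    have c1 : Real.exp (-a*(t - t₀)^2) * |(-(8*a^3)*(t - t₀)^4 + 24*a^2*(t - t₀)^2 - 6*a)|
          * Real.exp (-μ*t)
        ≤ (8*a^3*(t - t₀)^4 + 24*a^2*(t - t₀)^2 + 6*a)
            * (Real.exp (-a*(t - t₀)^2) * Real.exp (-μ*t)) := by
      have h := mul_le_mul_of_nonneg_right hPabs
        (show (0:ℝ) ≤ Real.exp (-a*(t - t₀)^2) * Real.exp (-μ*t) by positivity)
      calc Real.exp (-a*(t - t₀)^2) * |(-(8*a^3)*(t - t₀)^4 + 24*a^2*(t - t₀)^2 - 6*a)|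
            * Real.exp (-μ*t)
          = |(-(8*a^3)*(t - t₀)^4 + 24*a^2*(t - t₀)^2 - 6*a)|
              * (Real.exp (-a*(t - t₀)^2) * Real.exp (-μ*t)) := by ring
        _ ≤ _ := h
    have c2 : (8*a^3*(t - t₀)^4 + 24*a^2*(t - t₀)^2 + 6*a)
            * (Real.exp (-a*(t - t₀)^2) * Real.exp (-μ*t))
        ≤ (8*a^3*(t - t₀)^4 + 24*a^2*(t - t₀)^2 + 6*a)
            * (Real.exp (-(a*t₀^2)) * (Real.exp (-(a*t^2)) * Real.exp (α*t))) :=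
      mul_le_mul_of_nonneg_left hexp hSnn
    have c3 : (8*a^3*(t - t₀)^4 + 24*a^2*(t - t₀)^2 + 6*a)
            * (Real.exp (-(a*t₀^2)) * (Real.exp (-(a*t^2)) * Real.exp (α*t)))
        ≤ (a * (310 + 48*(a*t₀^2) + 64*(a*t₀^2)^2)) * Real.exp (-(a*t₀^2)) * Real.exp (α*t) := by
      have h := mul_le_mul_of_nonneg_right
            (mul_le_mul_of_nonneg_right hpoly (Real.exp_pos (-(a*t₀^2))).le)
            (Real.exp_pos (α*t)).le
      calc (8*a^3*(t - t₀)^4 + 24*a^2*(t - t₀)^2 + 6*a)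
            * (Real.exp (-(a*t₀^2)) * (Real.exp (-(a*t^2)) * Real.exp (α*t)))
          = (8*a^3*(t - t₀)^4 + 24*a^2*(t - t₀)^2 + 6*a) * Real.exp (-(a*t^2))
              * Real.exp (-(a*t₀^2)) * Real.exp (α*t) := by ring
        _ ≤ _ := h
    have c4 : (a * (310 + 48*(a*t₀^2) + 64*(a*t₀^2)^2)) * Real.exp (-(a*t₀^2)) * Real.exp (α*t)
        = M * Real.exp (α*t) := by rw [hM]
    exact le_trans (le_trans (le_trans c1 c2) c3) c4.le
  -- integrate
  have hInt : IntegrableOn (fun t : ℝ => M * Real.exp (α*t)) (Iic 0) :=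
    (exp_mul_integrableOn_Iic hα).const_mul M
  have step1 : (∫ t in Set.Iic (0:ℝ),
      |Real.exp (-(α^2/4)*(t - t₀)^2) *
          (-(8*(α^2/4)^3)*(t - t₀)^4 + 24*(α^2/4)^2*(t - t₀)^2 - 6*(α^2/4))| * Real.exp (-μ*t))
      ≤ ∫ t in Set.Iic (0:ℝ), M * Real.exp (α*t) := by
    apply integral_mono_of_nonneg
    · exact ae_of_all _ fun t => by positivity
    · exact hInt
    · filter_upwards [ae_restrict_mem measurableSet_Iic] with t ht
      exact hbound t ht
  have step2 : ∫ t in Set.Iic (0:ℝ), M * Real.exp (α*t) = M * (1/α) := by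
    rw [integral_const_mul, exp_mul_integral_Iic hα]
  -- final comparison
  have final : M * (1/α) ≤ 30000 * α * Real.exp (-(α*t₀/2 - 1)^2) := by
    clear hfun hbound hInt step1 step2
    set w : ℝ := α*t₀/2 with hw
    clear_value w
    have hsplit : Real.exp (-((α^2/4)*t₀^2))
        = Real.exp (-(2*w - 1)) * Real.exp (-(w - 1)^2) := by
      rw [← Real.exp_add]; congr 1; rw [hw]; ring
    have haw : (α^2/4)*t₀^2 = w^2 := by rw [hw]; ring
    have hw1 : 1 ≤ w := by rw [hw]; nlinarith
    have h4 : w^4 ≤ 256 * Real.exp (2*w - 1) := by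
      have h := Real.add_one_le_exp (w/4)
      have hpow : (w/4)^4 ≤ (Real.exp (w/4))^4 :=
        pow_le_pow_left₀ (by linarith) (by linarith) 4
      have hEq : (Real.exp (w/4))^4 = Real.exp w := by
        rw [← Real.exp_nat_mul]; congr 1; push_cast; ring
      have hle : Real.exp w ≤ Real.exp (2*w - 1) := Real.exp_le_exp.mpr (by linarith)
      nlinarith [hpow, hEq, hle]
    have hQ : 310 + 48*w^2 + 64*w^4 ≤ 422*w^4 := by nlinarith [hw1, sq_nonneg w, sq_nonneg (w^2 - 1), sq_nonneg (w - 1)]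
    have hEpos : (0:ℝ) < Real.exp (-(2*w - 1)) := Real.exp_pos _
    have hEe : Real.exp (2*w - 1) * Real.exp (-(2*w - 1)) = 1 := by
      rw [← Real.exp_add]; simp
    have key : (310 + 48*w^2 + 64*w^4) * Real.exp (-(2*w - 1)) ≤ 108032 := by
      nlinarith [mul_le_mul_of_nonneg_right hQ hEpos.le,
        mul_le_mul_of_nonneg_right h4 hEpos.le, hEe]
    have hQw : M * (1/α) = (α/4) * ((310 + 48*w^2 + 64*w^4) * Real.exp (-(2*w - 1)))
        * Real.exp (-(w - 1)^2) := by
      rw [hM, hsplit, haw]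
      field_simp
    rw [hQw]
    have hexpw : (0:ℝ) < Real.exp (-(w - 1)^2) := Real.exp_pos _
    have : (α/4) * ((310 + 48*w^2 + 64*w^4) * Real.exp (-(2*w - 1))) ≤ 30000 * α := by
      nlinarith [key, mul_le_mul_of_nonneg_left key (show (0:ℝ) ≤ α/4 by positivity)]
    exact mul_le_mul_of_nonneg_right this hexpw.le
  calc _ ≤ ∫ t in Set.Iic (0:ℝ), M * Real.exp (α*t) := step1
    _ = M * (1/α) := step2
    _ ≤ 30000 * α * Real.exp (-(α*t₀/2 - 1)^2) := final
end

section
/- Let s be a complex number with Re(s) > 0. Then for every nonzero w ∈ V there exists a nonzero v ∈ V (one may take v = (s/|s|)·w) such that |s²·⟪ι w, ι v⟫_H + a(w, v)| ≥ (Re(s)/|s|)·min(1, c)·‖w‖ₛ·‖v‖ₛ. In particular, the inf-sup constant γ(s) of the form (w, v) ↦ s²·⟪ι w, ι v⟫_H + a(w, v) with respect to the weighted norms ‖·‖ₛ is at least (Re(s)/|s|)·min(1, c). -/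
open MeasureTheory

/-- Inf-sup estimate (Lemma on γ(s)): let `a` be a bounded Hermitian sesquilinear form
(linear in its first, conjugate-linear in its second argument) on a complex Hilbert space `V`,
coercive with constant `c > 0`, and let `ι : V → H` be continuous linear. For `Re s > 0` and
every nonzero `w ∈ V` there is a nonzero `v ∈ V` (one may take `v = (s/|s|) • w`) with
`|s² ⟪ι w, ι v⟫_H + a(w, v)| ≥ (Re s/|s|) · min 1 c · ‖w‖ₛ · ‖v‖ₛ`,
where `‖u‖ₛ = sqrt (|s|² ‖ι u‖² + ‖u‖²)`.  Here the paper's pairing `⟪x, y⟫_H`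
(linear in `x`, conjugate-linear in `y`) is written as Mathlib's `inner y x`. -/
theorem inf_sup_lower_bound
    {V H : Type*} [NormedAddCommGroup V] [InnerProductSpace ℂ V] [CompleteSpace V]
    [NormedAddCommGroup H] [InnerProductSpace ℂ H] [CompleteSpace H]
    (ι : V →L[ℂ] H) (a : V → V → ℂ)
    (ha_add : ∀ u u' v : V, a (u + u') v = a u v + a u' v)
    (ha_smul : ∀ (z : ℂ) (u v : V), a (z • u) v = z * a u v)
    (ha_herm : ∀ u v : V, a u v = starRingEnd ℂ (a v u))
    (ha_bdd : ∃ C : ℝ, ∀ u v : V, ‖a u v‖ ≤ C * ‖u‖ * ‖v‖)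
    (c : ℝ) (hc : 0 < c) (ha_coer : ∀ v : V, c * ‖v‖ ^ 2 ≤ (a v v).re)
    (s : ℂ) (hs : 0 < s.re) :
    ∀ w : V, w ≠ 0 → ∃ v : V, v ≠ 0 ∧
      s.re / ‖s‖ * min 1 c *
          (Real.sqrt (‖s‖ ^ 2 * ‖ι w‖ ^ 2 + ‖w‖ ^ 2) *
            Real.sqrt (‖s‖ ^ 2 * ‖ι v‖ ^ 2 + ‖v‖ ^ 2)) ≤
        ‖s ^ 2 * (inner ℂ (ι v) (ι w) : ℂ) + a w v‖ := by
  intro w hw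
  have hs0 : s ≠ 0 := fun h => by simp [h] at hs
  have habs : (0:ℝ) < ‖s‖ := norm_pos_iff.mpr hs0
  set r : ℝ := ‖s‖ with hr
  have hrC : ((r:ℂ)) ≠ 0 := by exact_mod_cast habs.ne'
  set z : ℂ := s / (r : ℂ) with hz
  have hz0 : z ≠ 0 := div_ne_zero hs0 hrC
  refine ⟨z • w, smul_ne_zero hz0 hw, ?_⟩
  have hznorm : ‖z‖ = 1 := by
    simp [hz, norm_div, abs_of_pos habs, div_self habs.ne', ← hr]
  have hvnorm : ‖z • w‖ = ‖w‖ := by rw [norm_smul, hznorm, one_mul]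
  have hivnorm : ‖ι (z • w)‖ = ‖ι w‖ := by
    rw [ContinuousLinearMap.map_smul, norm_smul, hznorm, one_mul]
  rw [hvnorm, hivnorm]
  set K : ℝ := ‖ι w‖ ^ 2 with hKdef
  set W : ℝ := ‖w‖ ^ 2 with hWdef
  have hK0 : 0 ≤ K := sq_nonneg _
  have hW0 : 0 ≤ W := sq_nonneg _
  have hAim : (a w w).im = 0 := by
    have h := ha_herm w w
    have h2 : (a w w).im = -(a w w).im := by
      conv_lhs => rw [h]
      simp
    linarith
  have hA : a w w = ((a w w).re : ℂ) := Complex.ext (by simp) (by simp [hAim])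
  set A : ℝ := (a w w).re with hAdef
  have hAc : c * W ≤ A := ha_coer w
  have hinner : (inner ℂ (ι (z • w)) (ι w) : ℂ) = starRingEnd ℂ z * ((K : ℝ) : ℂ) := by
    rw [ContinuousLinearMap.map_smul, inner_smul_left]
    congr 1
    exact_mod_cast inner_self_eq_norm_sq_to_K (𝕜 := ℂ) (ι w)
  have haw : a w (z • w) = starRingEnd ℂ z * ((A : ℝ) : ℂ) := by
    rw [ha_herm w (z • w), ha_smul, map_mul, ← ha_herm, hA]
  rw [hinner, haw]
  have hcs : starRingEnd ℂ s * s = ((r : ℂ)) ^ 2 := by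
    rw [mul_comm, Complex.mul_conj, Complex.normSq_eq_norm_sq]
    push_cast [hr]
    ring_nf
  have hzconj : starRingEnd ℂ z = starRingEnd ℂ s / (r : ℂ) := by
    simp [hz, map_div₀]
  have hE : s ^ 2 * (starRingEnd ℂ z * ((K : ℝ) : ℂ)) + starRingEnd ℂ z * ((A : ℝ) : ℂ)
      = (r : ℂ) * s * ((K : ℝ) : ℂ) + (starRingEnd ℂ s / (r : ℂ)) * ((A : ℝ) : ℂ) := by
    rw [hzconj]
    field_simp
    linear_combination (((K : ℝ) : ℂ) * s) * hcs
  rw [hE]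
  have hre : ((r : ℂ) * s * ((K : ℝ) : ℂ)
        + (starRingEnd ℂ s / (r : ℂ)) * ((A : ℝ) : ℂ)).re
      = r * s.re * K + s.re / r * A := by
    have h2 : (starRingEnd ℂ s / (r : ℂ)) * ((A : ℝ) : ℂ)
        = ((A / r : ℝ) : ℂ) * starRingEnd ℂ s := by
      push_cast
      field_simp
    rw [h2]
    simp only [Complex.add_re, Complex.mul_re, Complex.ofReal_re, Complex.ofReal_im,
      Complex.conj_re, Complex.conj_im]
    field_simp
    ring
  have hX : Real.sqrt (r ^ 2 * K + W) * Real.sqrt (r ^ 2 * K + W) = r ^ 2 * K + W := by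
    apply Real.mul_self_sqrt
    nlinarith [sq_nonneg r]
  rw [hX]
  have h1 : 0 < s.re / r := div_pos hs habs
  have hmin : min 1 c * (r ^ 2 * K + W) ≤ r ^ 2 * K + A := by
    nlinarith [mul_nonneg (sub_nonneg.2 (min_le_left 1 c)) (mul_nonneg (sq_nonneg r) hK0),
      mul_nonneg (sub_nonneg.2 (min_le_right 1 c)) hW0, hAc]
  have hstep : s.re / r * min 1 c * (r ^ 2 * K + W) ≤ r * s.re * K + s.re / r * A := by
    calc s.re / r * min 1 c * (r ^ 2 * K + W)
        = s.re / r * (min 1 c * (r ^ 2 * K + W)) := by ring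
      _ ≤ s.re / r * (r ^ 2 * K + A) := mul_le_mul_of_nonneg_left hmin h1.le
      _ = r * s.re * K + s.re / r * A := by field_simp
  calc s.re / r * min 1 c * (r ^ 2 * K + W)
      ≤ r * s.re * K + s.re / r * A := hstep
    _ = ((r : ℂ) * s * ((K : ℝ) : ℂ) + (starRingEnd ℂ s / (r : ℂ)) * ((A : ℝ) : ℂ)).re :=
        hre.symm
    _ ≤ ‖(r : ℂ) * s * ((K : ℝ) : ℂ)
        + (starRingEnd ℂ s / (r : ℂ)) * ((A : ℝ) : ℂ)‖ := Complex.re_le_norm _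
end

section
/- Let s be a complex number with Re(s) > 0. Then for every continuous conjugate-linear functional F : V → ℂ there exists a unique φ ∈ V such that s²·⟪ι φ, ι v⟫_H + a(φ, v) = F(v) for all v ∈ V. -/
open MeasureTheory

/-- Well-posedness of the Laplace-domain problem: let `a` be a bounded Hermitian sesquilinear
form (linear in its first, conjugate-linear in its second argument) on a complex Hilbert
space `V`, coercive with constant `c > 0`, and `ι : V → H` continuous linear. For `Re s > 0`
and every continuous conjugate-linear functional `F : V → ℂ` there is a unique `φ ∈ V` with
`s² ⟪ι φ, ι v⟫_H + a(φ, v) = F v` for all `v ∈ V`.  Here the paper's pairing `⟪x, y⟫_H`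
(linear in `x`, conjugate-linear in `y`) is written as Mathlib's `inner ℂ y x`. -/
theorem laplace_domain_wellposed
    {V H : Type*} [NormedAddCommGroup V] [InnerProductSpace ℂ V] [CompleteSpace V]
    [NormedAddCommGroup H] [InnerProductSpace ℂ H] [CompleteSpace H]
    (ι : V →L[ℂ] H) (a : V → V → ℂ)
    (ha_add : ∀ u u' v : V, a (u + u') v = a u v + a u' v)
    (ha_smul : ∀ (z : ℂ) (u v : V), a (z • u) v = z * a u v)
    (ha_herm : ∀ u v : V, a u v = starRingEnd ℂ (a v u))
    (ha_bdd : ∃ C : ℝ, ∀ u v : V, ‖a u v‖ ≤ C * ‖u‖ * ‖v‖)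
    (c : ℝ) (hc : 0 < c) (ha_coer : ∀ v : V, c * ‖v‖ ^ 2 ≤ (a v v).re)
    (s : ℂ) (hs : 0 < s.re)
    (F : V →SL[starRingEnd ℂ] ℂ) :
    ∃! φ : V, ∀ v : V, s ^ 2 * (inner ℂ (ι v) (ι φ) : ℂ) + a φ v = F v := by
  classical
  obtain ⟨C, hC⟩ := ha_bdd
  set b : V → V → ℂ := fun u v => s ^ 2 * (inner ℂ (ι v) (ι u) : ℂ) + a u v with hbdef
  set M : ℝ := ‖s‖ ^ 2 * ‖ι‖ ^ 2 + max C 0 with hMdef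
  have hM0 : 0 ≤ M := by positivity
  -- conjugate-linearity in the second argument
  have hav_add : ∀ u v v' : V, a u (v + v') = a u v + a u v' := by
    intro u v v'
    rw [ha_herm u (v + v'), ha_add, map_add, ← ha_herm, ← ha_herm]
  have hav_smul : ∀ (z : ℂ) (u v : V), a u (z • v) = starRingEnd ℂ z * a u v := by
    intro z u v
    rw [ha_herm u (z • v), ha_smul, map_mul, ← ha_herm]
  -- bound on b
  have hbnd : ∀ u v : V, ‖b u v‖ ≤ M * ‖u‖ * ‖v‖ := by
    intro u v
    have h1 : ‖s ^ 2 * (inner ℂ (ι v) (ι u) : ℂ)‖ ≤ ‖s‖ ^ 2 * ‖ι‖ ^ 2 * ‖u‖ * ‖v‖ := by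
      rw [norm_mul, norm_pow]
      have h2 : ‖(inner ℂ (ι v) (ι u) : ℂ)‖ ≤ ‖ι v‖ * ‖ι u‖ := norm_inner_le_norm _ _
      have h3 : ‖ι v‖ ≤ ‖ι‖ * ‖v‖ := ι.le_opNorm v
      have h4 : ‖ι u‖ ≤ ‖ι‖ * ‖u‖ := ι.le_opNorm u
      have h6 : ‖(inner ℂ (ι v) (ι u) : ℂ)‖ ≤ ‖ι‖ * ‖v‖ * (‖ι‖ * ‖u‖) :=
        h2.trans (mul_le_mul h3 h4 (norm_nonneg _) (by positivity))
      calc ‖s‖ ^ 2 * ‖(inner ℂ (ι v) (ι u) : ℂ)‖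
          ≤ ‖s‖ ^ 2 * (‖ι‖ * ‖v‖ * (‖ι‖ * ‖u‖)) :=
            mul_le_mul_of_nonneg_left h6 (by positivity)
        _ = ‖s‖ ^ 2 * ‖ι‖ ^ 2 * ‖u‖ * ‖v‖ := by ring
    have h5 : ‖a u v‖ ≤ max C 0 * ‖u‖ * ‖v‖ := by
      refine (hC u v).trans ?_
      have : C * ‖u‖ ≤ max C 0 * ‖u‖ :=
        mul_le_mul_of_nonneg_right (le_max_left _ _) (norm_nonneg _)
      exact mul_le_mul_of_nonneg_right this (norm_nonneg _)
    calc ‖b u v‖ ≤ ‖s ^ 2 * (inner ℂ (ι v) (ι u) : ℂ)‖ + ‖a u v‖ := norm_add_le _ _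
      _ ≤ ‖s‖ ^ 2 * ‖ι‖ ^ 2 * ‖u‖ * ‖v‖ + max C 0 * ‖u‖ * ‖v‖ := add_le_add h1 h5
      _ = M * ‖u‖ * ‖v‖ := by ring
  -- coercivity of conj s * b u u
  have hcoer : ∀ u : V, s.re * (c * ‖u‖ ^ 2) ≤ (starRingEnd ℂ s * b u u).re := by
    intro u
    have him_r : (inner ℂ (ι u) (ι u) : ℂ).im = 0 := by
      exact inner_self_im (𝕜 := ℂ) (ι u)
    have hre_r : (0:ℝ) ≤ (inner ℂ (ι u) (ι u) : ℂ).re := by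
      have h := inner_self_nonneg (𝕜 := ℂ) (x := ι u); simpa using h
    have him_t : (a u u).im = 0 := by
      have h := (ha_herm u u).symm
      exact (Complex.conj_eq_iff_im.mp h)
    have hre_t : c * ‖u‖ ^ 2 ≤ (a u u).re := ha_coer u
    have hexpand : (starRingEnd ℂ s * b u u).re
        = (s.re ^ 2 + s.im ^ 2) * s.re * (inner ℂ (ι u) (ι u) : ℂ).re
          + s.re * (a u u).re := by
      simp only [hbdef, pow_two, mul_add, Complex.add_re, Complex.mul_re, Complex.mul_im,
        Complex.conj_re, Complex.conj_im, him_r, him_t]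
      ring
    rw [hexpand]
    nlinarith [mul_nonneg (mul_nonneg (by positivity : (0:ℝ) ≤ s.re ^ 2 + s.im ^ 2) hs.le) hre_r,
      mul_le_mul_of_nonneg_left hre_t hs.le]
  -- the functional v ↦ conj (b u v) is continuous linear
  let G : V → (V →L[ℂ] ℂ) := fun u =>
    LinearMap.mkContinuous
      { toFun := fun v => starRingEnd ℂ (b u v)
        map_add' := by
          intro v w
          simp only [hbdef, inner_add_left, map_add, hav_add, mul_add]
          ring
        map_smul' := by
          intro z v
          simp only [hbdef, ContinuousLinearMap.map_smul, inner_smul_left, hav_smul, map_mul,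
            map_add, RingHom.id_apply, Complex.conj_conj, smul_eq_mul]
          ring }
      (M * ‖u‖)
      (fun v => by
        simpa [mul_assoc] using hbnd u v)
  let A : V → V := fun u => (InnerProductSpace.toDual ℂ V).symm (G u)
  have hA : ∀ u v : V, (inner ℂ v (A u) : ℂ) = b u v := by
    intro u v
    have h1 : (inner ℂ (A u) v : ℂ) = G u v := InnerProductSpace.toDual_symm_apply
    have h2 : G u v = starRingEnd ℂ (b u v) := rfl
    calc (inner ℂ v (A u) : ℂ) = starRingEnd ℂ (inner ℂ (A u) v : ℂ) := (inner_conj_symm _ _).symm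
      _ = starRingEnd ℂ (starRingEnd ℂ (b u v)) := by rw [h1, h2]
      _ = b u v := Complex.conj_conj _
  -- A is additive
  have hAadd : ∀ u u' : V, A (u + u') = A u + A u' := by
    intro u u'
    refine ext_inner_left ℂ fun v => ?_
    rw [hA, inner_add_right, hA, hA]
    simp only [hbdef, ha_add, ContinuousLinearMap.map_add, inner_add_right, mul_add]
    ring
  have hAsmul : ∀ (z : ℂ) (u : V), A (z • u) = z • A u := by
    intro z u
    refine ext_inner_left ℂ fun v => ?_
    rw [hA, inner_smul_right, hA]
    simp only [hbdef, ha_smul, ContinuousLinearMap.map_smul, inner_smul_right]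
    ring
  have hAbound : ∀ u : V, ‖A u‖ ≤ M * ‖u‖ := by
    intro u
    have h1 : (inner ℂ (A u) (A u) : ℂ) = b u (A u) := hA u (A u)
    have h2 : (inner ℂ (A u) (A u) : ℂ) = ((‖A u‖ : ℂ)) ^ 2 := inner_self_eq_norm_sq_to_K _
    have h3 : ‖A u‖ ^ 2 = ‖b u (A u)‖ := by
      rw [← h1, h2]
      rw [norm_pow, Complex.norm_real, Real.norm_eq_abs, abs_norm]
    have h4 : ‖A u‖ ^ 2 ≤ M * ‖u‖ * ‖A u‖ := h3.trans_le (hbnd u (A u))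
    rcases eq_or_lt_of_le (norm_nonneg (A u)) with h | h
    · rw [← h]; positivity
    · nlinarith
  let Alin : V →ₗ[ℂ] V :=
    { toFun := A
      map_add' := hAadd
      map_smul' := hAsmul }
  let Acl : V →L[ℂ] V := Alin.mkContinuous M hAbound
  have hAcl : ∀ u, Acl u = A u := fun _ => rfl
  -- lower bound: antilipschitz
  have hlow : ∀ u : V, ‖u‖ ≤ (‖s‖ / (s.re * c)) * ‖Acl u‖ := by
    intro u
    have h1 : s.re * (c * ‖u‖ ^ 2) ≤ (starRingEnd ℂ s * b u u).re := hcoer u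
    have h2 : (starRingEnd ℂ s * b u u).re ≤ ‖starRingEnd ℂ s * b u u‖ := Complex.re_le_norm _
    have h3 : ‖starRingEnd ℂ s * b u u‖ = ‖s‖ * ‖b u u‖ := by
      rw [norm_mul, RCLike.norm_conj]
    have h4 : ‖b u u‖ ≤ ‖u‖ * ‖A u‖ := by
      rw [← hA u u]
      exact norm_inner_le_norm _ _
    have h5 : s.re * (c * ‖u‖ ^ 2) ≤ ‖s‖ * (‖u‖ * ‖A u‖) := by
      calc s.re * (c * ‖u‖ ^ 2) ≤ ‖s‖ * ‖b u u‖ := by rw [← h3]; exact h1.trans h2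
        _ ≤ ‖s‖ * (‖u‖ * ‖A u‖) := mul_le_mul_of_nonneg_left h4 (norm_nonneg _)
    have hsc : 0 < s.re * c := mul_pos hs hc
    rw [hAcl]
    rcases eq_or_lt_of_le (norm_nonneg u) with h | h
    · rw [← h]; positivity
    · rw [div_mul_eq_mul_div, le_div_iff₀ hsc]
      nlinarith
  have hanti : AntilipschitzWith (Real.toNNReal (‖s‖ / (s.re * c))) Acl :=
    Acl.antilipschitz_of_bound (fun x => by
      have hx := hlow x
      rwa [← Real.coe_toNNReal (‖s‖ / (s.re * c)) (by positivity)] at hx)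
  -- range of Acl is closed, hence complete
  have hclosed : IsClosed (Set.range Acl) :=
    hanti.isClosed_range Acl.uniformContinuous
  set K : Submodule ℂ V := LinearMap.range (Acl : V →ₗ[ℂ] V) with hKdef
  have hKset : (K : Set V) = Set.range Acl := by
    ext x; simp [hKdef, LinearMap.mem_range]
  have hKclosed : IsClosed (K : Set V) := hKset ▸ hclosed
  haveI : CompleteSpace K := hKclosed.completeSpace_coe
  -- orthogonal complement is trivial
  have horth : Kᗮ = ⊥ := by
    rw [Submodule.eq_bot_iff]
    intro w hw
    have h0 : (inner ℂ (Acl w) w : ℂ) = 0 :=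
      (Submodule.mem_orthogonal K w).mp hw (Acl w) (LinearMap.mem_range_self _ w)
    have hb0 : b w w = 0 := by
      rw [← hA w w]
      rw [← inner_conj_symm]
      rw [show (inner ℂ (A w) w : ℂ) = (inner ℂ (Acl w) w : ℂ) from rfl, h0, map_zero]
    have h1 : s.re * (c * ‖w‖ ^ 2) ≤ 0 := by
      have := hcoer w
      rwa [hb0, mul_zero, Complex.zero_re] at this
    have h2 : ‖w‖ ^ 2 ≤ 0 := by nlinarith [mul_pos hs hc]
    have : ‖w‖ = 0 := by nlinarith [norm_nonneg w, sq_nonneg ‖w‖]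
    exact norm_eq_zero.mp this
  have hKtop : K = ⊤ := Submodule.orthogonal_eq_bot_iff.mp horth
  -- Riesz representative of F
  let Gf : V →L[ℂ] ℂ :=
    { toLinearMap :=
        { toFun := fun v => starRingEnd ℂ (F v)
          map_add' := by intro v w; simp
          map_smul' := by intro z v; simp }
      cont := Complex.continuous_conj.comp F.continuous }
  let f : V := (InnerProductSpace.toDual ℂ V).symm Gf
  have hf : ∀ v : V, (inner ℂ v f : ℂ) = F v := by
    intro v
    have h1 : (inner ℂ f v : ℂ) = Gf v := InnerProductSpace.toDual_symm_apply
    calc (inner ℂ v f : ℂ) = starRingEnd ℂ (inner ℂ f v : ℂ) := (inner_conj_symm _ _).symm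
      _ = starRingEnd ℂ (starRingEnd ℂ (F v)) := by rw [h1]; rfl
      _ = F v := Complex.conj_conj _
  -- existence
  have hfK : f ∈ K := hKtop ▸ Submodule.mem_top
  obtain ⟨φ, hφ⟩ := LinearMap.mem_range.mp hfK
  refine ⟨φ, ?_, ?_⟩
  · intro v
    have : b φ v = (inner ℂ v f : ℂ) := by rw [← hA φ v, ← hφ]; rfl
    rw [show s ^ 2 * (inner ℂ (ι v) (ι φ) : ℂ) + a φ v = b φ v from rfl, this, hf]
  · intro ψ hψ
    have heq : Acl ψ = Acl φ := by
      refine ext_inner_left ℂ fun v => ?_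
      rw [hAcl, hAcl, hA, hA]
      show s ^ 2 * (inner ℂ (ι v) (ι ψ) : ℂ) + a ψ v = s ^ 2 * (inner ℂ (ι v) (ι φ) : ℂ) + a φ v
      rw [hψ v]
      have : b φ v = (inner ℂ v f : ℂ) := by rw [← hA φ v, ← hφ]; rfl
      rw [show s ^ 2 * (inner ℂ (ι v) (ι φ) : ℂ) + a φ v = b φ v from rfl, this, hf]
    have := hanti.injective heq
    exact this
end

section
/- Let s be a complex number with Re(s) > 0, let f ∈ H, and suppose φ ∈ V satisfies s²·⟪ι φ, ι v⟫_H + a(φ, v) = ⟪f, ι v⟫_H for all v ∈ V. Then sqrt(|s|²·‖ι φ‖_H² + ‖φ‖_V²) ≤ ‖f‖_H / (Re(s)·min(1, c)); in particular ‖φ‖_V ≤ ‖f‖_H / (Re(s)·min(1, c)). -/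
open MeasureTheory

/-- Basic stability bound in the Laplace domain: if `Re s > 0`, `f ∈ H`, and `φ ∈ V` satisfies
`s² ⟪ι φ, ι v⟫_H + a(φ, v) = ⟪f, ι v⟫_H` for all `v`, then
`sqrt (|s|² ‖ι φ‖² + ‖φ‖²) ≤ ‖f‖ / (Re s · min 1 c)`; in particular
`‖φ‖_V ≤ ‖f‖ / (Re s · min 1 c)`.  Here the paper's pairing `⟪x, y⟫_H`
(linear in `x`, conjugate-linear in `y`) is written as Mathlib's `inner y x`. -/
theorem laplace_domain_stability
    {V H : Type*} [NormedAddCommGroup V] [InnerProductSpace ℂ V] [CompleteSpace V]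
    [NormedAddCommGroup H] [InnerProductSpace ℂ H] [CompleteSpace H]
    (ι : V →L[ℂ] H) (a : V → V → ℂ)
    (ha_add : ∀ u u' v : V, a (u + u') v = a u v + a u' v)
    (ha_smul : ∀ (z : ℂ) (u v : V), a (z • u) v = z * a u v)
    (ha_herm : ∀ u v : V, a u v = starRingEnd ℂ (a v u))
    (ha_bdd : ∃ C : ℝ, ∀ u v : V, ‖a u v‖ ≤ C * ‖u‖ * ‖v‖)
    (c : ℝ) (hc : 0 < c) (ha_coer : ∀ v : V, c * ‖v‖ ^ 2 ≤ (a v v).re)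
    (s : ℂ) (hs : 0 < s.re)
    (f : H) (φ : V)
    (heq : ∀ v : V, s ^ 2 * (inner ℂ (ι v) (ι φ) : ℂ) + a φ v = (inner ℂ (ι v) f : ℂ)) :
    Real.sqrt (‖s‖ ^ 2 * ‖ι φ‖ ^ 2 + ‖φ‖ ^ 2) ≤ ‖f‖ / (s.re * min 1 c) ∧
      ‖φ‖ ≤ ‖f‖ / (s.re * min 1 c) := by

  have haim : (a φ φ).im = 0 := by
    have h := ha_herm φ φ
    have h2 : (a φ φ).im = -(a φ φ).im := by
      conv_lhs => rw [h]
      simp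
    linarith
  have hinner : (inner ℂ (ι φ) (ι φ) : ℂ) = (‖ι φ‖ : ℂ) ^ 2 := by
    rw [inner_self_eq_norm_sq_to_K]
    norm_cast
  have h := heq φ
  have hre : (starRingEnd ℂ s * (s ^ 2 * (inner ℂ (ι φ) (ι φ) : ℂ) + a φ φ)).re
      = (starRingEnd ℂ s * (inner ℂ (ι φ) f : ℂ)).re := by rw [h]
  have hLHS : (starRingEnd ℂ s * (s ^ 2 * (inner ℂ (ι φ) (ι φ) : ℂ) + a φ φ)).re
      = s.re * (‖s‖ ^ 2 * ‖ι φ‖ ^ 2 + (a φ φ).re) := by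
    rw [hinner]
    rw [Complex.sq_norm]
    simp [Complex.mul_re, Complex.mul_im, Complex.add_re, Complex.add_im, haim,
      Complex.normSq_apply, pow_two]
    ring
  have hRHS : (starRingEnd ℂ s * (inner ℂ (ι φ) f : ℂ)).re ≤ ‖s‖ * ‖ι φ‖ * ‖f‖ := by
    calc (starRingEnd ℂ s * (inner ℂ (ι φ) f : ℂ)).re
        ≤ ‖(starRingEnd ℂ s * (inner ℂ (ι φ) f : ℂ))‖ := Complex.re_le_norm _
      _ = ‖s‖ * ‖(inner ℂ (ι φ) f : ℂ)‖ := by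
          rw [norm_mul, Complex.norm_conj]
      _ ≤ ‖s‖ * (‖ι φ‖ * ‖f‖) := by
          exact mul_le_mul_of_nonneg_left (norm_inner_le_norm _ _) (norm_nonneg s)
      _ = ‖s‖ * ‖ι φ‖ * ‖f‖ := by ring
  have key : s.re * (‖s‖ ^ 2 * ‖ι φ‖ ^ 2 + (a φ φ).re)
      ≤ ‖s‖ * ‖ι φ‖ * ‖f‖ := by
    rw [← hLHS]; rw [hre]; exact hRHS
  set X2 : ℝ := ‖s‖ ^ 2 * ‖ι φ‖ ^ 2 + ‖φ‖ ^ 2 with hX2def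
  have hX2nn : 0 ≤ X2 := by positivity
  set X : ℝ := Real.sqrt X2 with hXdef
  have hXnn : 0 ≤ X := Real.sqrt_nonneg _
  have hXsq : X ^ 2 = X2 := Real.sq_sqrt hX2nn
  set m : ℝ := min 1 c with hmdef
  have hm : 0 < m := lt_min one_pos hc
  have hcoer := ha_coer φ
  have hsb : ‖s‖ * ‖ι φ‖ ≤ X := by
    rw [hXdef]
    rw [show ‖s‖ * ‖ι φ‖ = Real.sqrt ((‖s‖ * ‖ι φ‖) ^ 2) from
      (Real.sqrt_sq (by positivity)).symm]
    apply Real.sqrt_le_sqrt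
    nlinarith [sq_nonneg (‖φ‖ : ℝ)]
  have hmain : s.re * m * X ^ 2 ≤ X * ‖f‖ := by
    have h1 : s.re * m * X ^ 2 ≤ s.re * (‖s‖ ^ 2 * ‖ι φ‖ ^ 2 + (a φ φ).re) := by
      rw [hXsq, hX2def]
      have hm1 : m ≤ 1 := min_le_left _ _
      have hm2 : m ≤ c := min_le_right _ _
      have hA : (0:ℝ) ≤ ‖s‖ ^ 2 * ‖ι φ‖ ^ 2 := by positivity
      have hB : (0:ℝ) ≤ ‖φ‖ ^ 2 := sq_nonneg _
      nlinarith [mul_le_mul_of_nonneg_left (mul_le_mul_of_nonneg_right hm1 hA) hs.le,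
        mul_le_mul_of_nonneg_left (le_trans (mul_le_mul_of_nonneg_right hm2 hB) hcoer) hs.le]
    have h2 : ‖s‖ * ‖ι φ‖ * ‖f‖ ≤ X * ‖f‖ :=
      mul_le_mul_of_nonneg_right hsb (norm_nonneg f)
    linarith
  have hfinal : X ≤ ‖f‖ / (s.re * m) := by
    rw [le_div_iff₀ (by positivity)]
    rcases eq_or_lt_of_le hXnn with h0 | h0
    · rw [← h0]; simpa using norm_nonneg f
    · nlinarith
  refine ⟨hfinal, le_trans ?_ hfinal⟩
  rw [hXdef, ← Real.sqrt_sq (norm_nonneg φ)]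
  apply Real.sqrt_le_sqrt
  nlinarith [sq_nonneg (‖s‖ * ‖ι φ‖)]
end

section
/- Let s be a complex number with Re(s) > 0. Let φ₀, φ₁ ∈ V and suppose there exist h₀, h₁ ∈ H with a(φ₀, v) = ⟪h₀, ι v⟫_H and a(φ₁, v) = ⟪h₁, ι v⟫_H for all v ∈ V. Let f ∈ H and suppose φ ∈ V satisfies s²·⟪ι φ, ι v⟫_H + a(φ, v) = ⟪f, ι v⟫_H + s·⟪ι φ₀, ι v⟫_H + ⟪ι φ₁, ι v⟫_H for all v ∈ V. Then ‖φ‖_V ≤ ‖φ₀‖_V/|s| + ‖φ₁‖_V/|s|² + (1/(Re(s)·min(1, c)))·(‖f‖_H + ‖h₀‖_H/|s| + ‖h₁‖_H/|s|²). -/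
open MeasureTheory

set_option maxHeartbeats 1000000

/-- Stability bound with initial data (Proposition 1, bound (1)): under the assumptions on the
Hermitian coercive form `a`, if `Re s > 0`, `φ₀, φ₁ ∈ V` with `a(φ₀, ·) = ⟪h₀, ι ·⟫_H`,
`a(φ₁, ·) = ⟪h₁, ι ·⟫_H` for `h₀, h₁ ∈ H`, `f ∈ H`, and `φ ∈ V` solves
`s² ⟪ι φ, ι v⟫ + a(φ, v) = ⟪f, ι v⟫ + s ⟪ι φ₀, ι v⟫ + ⟪ι φ₁, ι v⟫` for all `v`, then
`‖φ‖_V ≤ ‖φ₀‖_V/|s| + ‖φ₁‖_V/|s|² + (1/(Re s · min 1 c)) (‖f‖_H + ‖h₀‖_H/|s| + ‖h₁‖_H/|s|²)`.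
Here the paper's pairing `⟪x, y⟫_H` (linear in `x`, conjugate-linear in `y`) is written as
Mathlib's `inner y x`. -/
theorem laplace_domain_stability_data
    {V H : Type*} [NormedAddCommGroup V] [InnerProductSpace ℂ V] [CompleteSpace V]
    [NormedAddCommGroup H] [InnerProductSpace ℂ H] [CompleteSpace H]
    (ι : V →L[ℂ] H) (a : V → V → ℂ)
    (ha_add : ∀ u u' v : V, a (u + u') v = a u v + a u' v)
    (ha_smul : ∀ (z : ℂ) (u v : V), a (z • u) v = z * a u v)
    (ha_herm : ∀ u v : V, a u v = starRingEnd ℂ (a v u))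
    (ha_bdd : ∃ C : ℝ, ∀ u v : V, ‖a u v‖ ≤ C * ‖u‖ * ‖v‖)
    (c : ℝ) (hc : 0 < c) (ha_coer : ∀ v : V, c * ‖v‖ ^ 2 ≤ (a v v).re)
    (s : ℂ) (hs : 0 < s.re)
    (φ₀ φ₁ : V) (h₀ h₁ : H)
    (hφ₀ : ∀ v : V, a φ₀ v = (inner ℂ (ι v) h₀ : ℂ))
    (hφ₁ : ∀ v : V, a φ₁ v = (inner ℂ (ι v) h₁ : ℂ))
    (f : H) (φ : V)
    (heq : ∀ v : V, s ^ 2 * (inner ℂ (ι v) (ι φ) : ℂ) + a φ v =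
      (inner ℂ (ι v) f : ℂ) + s * (inner ℂ (ι v) (ι φ₀) : ℂ) + (inner ℂ (ι v) (ι φ₁) : ℂ)) :
    ‖φ‖ ≤ ‖φ₀‖ / ‖s‖ + ‖φ₁‖ / ‖s‖ ^ 2 +
      1 / (s.re * min 1 c) *
        (‖f‖ + ‖h₀‖ / ‖s‖ + ‖h₁‖ / ‖s‖ ^ 2) := by

  have hs0 : s ≠ 0 := fun h => by simp [h] at hs
  have habs : (0:ℝ) < ‖s‖ := by
    simpa using (norm_pos_iff.mpr hs0)
  have ha_sub : ∀ u u' v : V, a (u - u') v = a u v - a u' v := by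
    intro u u' v
    rw [sub_eq_add_neg, ← neg_one_smul ℂ u', ha_add, ha_smul]
    ring
  set ψ : V := φ - s⁻¹ • φ₀ - s⁻¹ • s⁻¹ • φ₁ with hψdef
  set g : H := f - s⁻¹ • h₀ - s⁻¹ • s⁻¹ • h₁ with hgdef
  have hsinv : s⁻¹ * s = 1 := inv_mul_cancel₀ hs0
  have key : ∀ v : V, s ^ 2 * (inner ℂ (ι v) (ι ψ) : ℂ) + a ψ v = (inner ℂ (ι v) g : ℂ) := by
    intro v
    have e1 := heq v
    have e2 := hφ₀ v
    have e3 := hφ₁ v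
    simp only [hψdef, hgdef, map_sub, _root_.map_smul, inner_sub_right, inner_smul_right,
      ha_sub, ha_smul, ContinuousLinearMap.map_smul]
    rw [e2, e3] at *
    field_simp
    linear_combination s^2 * e1
  have hψψ := key ψ
  have himA : (a ψ ψ).im = 0 := Complex.conj_eq_iff_im.mp (ha_herm ψ ψ).symm
  have hinner_self : (inner ℂ (ι ψ) (ι ψ) : ℂ) = ((‖ι ψ‖ : ℝ) : ℂ) ^ 2 := by
    rw [inner_self_eq_norm_sq_to_K]
    norm_cast
  have hmain : s.re * (‖s‖ ^ 2 * ‖ι ψ‖ ^ 2 + (a ψ ψ).re) ≤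
      ‖s‖ * ‖ι ψ‖ * ‖g‖ := by
    have h1 : ((starRingEnd ℂ s) * (s ^ 2 * (inner ℂ (ι ψ) (ι ψ) : ℂ) + a ψ ψ)).re =
        ((starRingEnd ℂ s) * (inner ℂ (ι ψ) g : ℂ)).re := by rw [hψψ]
    have hL : ((starRingEnd ℂ s) * (s ^ 2 * (inner ℂ (ι ψ) (ι ψ) : ℂ) + a ψ ψ)).re =
        s.re * (‖s‖ ^ 2 * ‖ι ψ‖ ^ 2 + (a ψ ψ).re) := by
      rw [hinner_self]
      have habs2 : ‖s‖ ^ 2 = s.re ^ 2 + s.im ^ 2 := by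
        rw [Complex.sq_norm, Complex.normSq_apply]; ring
      simp [Complex.mul_re, Complex.mul_im, Complex.add_re, Complex.add_im,
        Complex.conj_re, Complex.conj_im, pow_two, himA, habs2]
      ring
    have hR : ((starRingEnd ℂ s) * (inner ℂ (ι ψ) g : ℂ)).re ≤
        ‖s‖ * ‖ι ψ‖ * ‖g‖ := by
      calc ((starRingEnd ℂ s) * (inner ℂ (ι ψ) g : ℂ)).re
          ≤ ‖(starRingEnd ℂ s) * (inner ℂ (ι ψ) g : ℂ)‖ := Complex.re_le_norm _
        _ = ‖s‖ * ‖(inner ℂ (ι ψ) g : ℂ)‖ := by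
            rw [norm_mul, Complex.norm_conj]
        _ ≤ ‖s‖ * (‖ι ψ‖ * ‖g‖) := by
            apply mul_le_mul_of_nonneg_left _ (norm_nonneg s)
            exact norm_inner_le_norm (𝕜 := ℂ) _ _
        _ = ‖s‖ * ‖ι ψ‖ * ‖g‖ := by ring
    rw [hL] at h1
    linarith [h1, hR]
  have hm : (0:ℝ) < min 1 c := lt_min one_pos hc
  have hA : c * ‖ψ‖ ^ 2 ≤ (a ψ ψ).re := ha_coer ψ
  set B : ℝ := ‖s‖ * ‖ι ψ‖ with hB
  have hB0 : 0 ≤ B := mul_nonneg (norm_nonneg s) (norm_nonneg _)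
  have hstep : s.re * (min 1 c) * (B ^ 2 + ‖ψ‖ ^ 2) ≤ B * ‖g‖ := by
    have h1 : (min 1 c) * (B ^ 2 + ‖ψ‖ ^ 2) ≤ B ^ 2 + (a ψ ψ).re := by
      have := min_le_left (1:ℝ) c
      have := min_le_right (1:ℝ) c
      nlinarith [sq_nonneg B, sq_nonneg (‖ψ‖), hA]
    have h2 : s.re * ((min 1 c) * (B ^ 2 + ‖ψ‖ ^ 2)) ≤ s.re * (B ^ 2 + (a ψ ψ).re) :=
      mul_le_mul_of_nonneg_left h1 (le_of_lt hs)
    have h3 : s.re * (B ^ 2 + (a ψ ψ).re) ≤ B * ‖g‖ := by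
      have h5 : ‖s‖ ^ 2 * ‖ι ψ‖ ^ 2 = B ^ 2 := by rw [hB]; ring
      rw [← h5]
      exact hmain
    linarith [h2, h3]
  have hψle : ‖ψ‖ ≤ ‖g‖ / (s.re * min 1 c) := by
    set X : ℝ := Real.sqrt (B ^ 2 + ‖ψ‖ ^ 2) with hX
    have hX0 : 0 ≤ X := Real.sqrt_nonneg _
    have hXsq : X ^ 2 = B ^ 2 + ‖ψ‖ ^ 2 := by
      rw [hX, sq, Real.mul_self_sqrt (by positivity)]
    have hBX : B ≤ X := by
      nlinarith [hXsq, sq_nonneg (‖ψ‖), hX0, hB0, sq_nonneg (X - B)]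
    have hNX : ‖ψ‖ ≤ X := by
      nlinarith [hXsq, sq_nonneg B, hX0, norm_nonneg ψ, sq_nonneg (X - ‖ψ‖)]
    have hXle : s.re * min 1 c * X ≤ ‖g‖ := by
      rcases eq_or_lt_of_le hX0 with h0 | h0
      · rw [← h0]; simpa using norm_nonneg g
      · have hBg : B * ‖g‖ ≤ X * ‖g‖ := mul_le_mul_of_nonneg_right hBX (norm_nonneg g)
        have hchain : s.re * min 1 c * X * X ≤ X * ‖g‖ := by
          have h4 : s.re * min 1 c * X * X = s.re * min 1 c * (B ^ 2 + ‖ψ‖ ^ 2) := by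
            rw [← hXsq]; ring
          rw [h4]; exact hstep.trans hBg
        exact le_of_mul_le_mul_right (by linarith [hchain, mul_comm X ‖g‖]) h0
    rw [le_div_iff₀ (by positivity)]
    nlinarith [hNX, hXle, mul_le_mul_of_nonneg_left hNX (le_of_lt (mul_pos hs hm))]
  have hφdecomp : φ = ψ + s⁻¹ • φ₀ + s⁻¹ • s⁻¹ • φ₁ := by
    rw [hψdef]; abel
  have hnorm_inv : ‖(s⁻¹ : ℂ)‖ = ‖s‖⁻¹ := by
    rw [norm_inv]
  have hφle : ‖φ‖ ≤ ‖ψ‖ + ‖φ₀‖ / ‖s‖ + ‖φ₁‖ / ‖s‖ ^ 2 := by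
    rw [hφdecomp]
    calc ‖ψ + s⁻¹ • φ₀ + s⁻¹ • s⁻¹ • φ₁‖
        ≤ ‖ψ + s⁻¹ • φ₀‖ + ‖s⁻¹ • s⁻¹ • φ₁‖ := norm_add_le _ _
      _ ≤ ‖ψ‖ + ‖s⁻¹ • φ₀‖ + ‖s⁻¹ • s⁻¹ • φ₁‖ := by
          linarith [norm_add_le ψ (s⁻¹ • φ₀)]
      _ = ‖ψ‖ + ‖φ₀‖ / ‖s‖ + ‖φ₁‖ / ‖s‖ ^ 2 := by
          rw [norm_smul, norm_smul, norm_smul, hnorm_inv]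
          field_simp
  have hgle : ‖g‖ ≤ ‖f‖ + ‖h₀‖ / ‖s‖ + ‖h₁‖ / ‖s‖ ^ 2 := by
    rw [hgdef]
    calc ‖f - s⁻¹ • h₀ - s⁻¹ • s⁻¹ • h₁‖
        ≤ ‖f - s⁻¹ • h₀‖ + ‖s⁻¹ • s⁻¹ • h₁‖ := norm_sub_le _ _
      _ ≤ ‖f‖ + ‖s⁻¹ • h₀‖ + ‖s⁻¹ • s⁻¹ • h₁‖ := by
          linarith [norm_sub_le f (s⁻¹ • h₀)]
      _ = ‖f‖ + ‖h₀‖ / ‖s‖ + ‖h₁‖ / ‖s‖ ^ 2 := by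
          rw [norm_smul, norm_smul, norm_smul, hnorm_inv]
          field_simp
  have hfinal : ‖g‖ / (s.re * min 1 c) ≤
      1 / (s.re * min 1 c) * (‖f‖ + ‖h₀‖ / ‖s‖ + ‖h₁‖ / ‖s‖ ^ 2) := by
    rw [div_eq_mul_inv, one_div, mul_comm]
    exact mul_le_mul_of_nonneg_left hgle (by positivity)
  linarith [hφle, hψle, hfinal]
end

section
/- Let s be a complex number with Re(s) > 0. Let φ₀, φ₁ ∈ V and suppose there exist h₀, h₁ ∈ H with a(φ₀, v) = ⟪h₀, ι v⟫_H and a(φ₁, v) = ⟪h₁, ι v⟫_H for all v ∈ V. Let f ∈ H and suppose φ ∈ V satisfies s²·⟪ι φ, ι v⟫_H + a(φ, v) = ⟪f, ι v⟫_H + s·⟪ι φ₀, ι v⟫_H + ⟪ι φ₁, ι v⟫_H for all v ∈ V. Then ‖s·(ι φ) − ι φ₀‖_H ≤ ‖ι φ₁‖_H/|s| + (1/(Re(s)·min(1, c)))·(‖f‖_H + ‖h₀‖_H/|s| + ‖h₁‖_H/|s|²). -/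
open MeasureTheory

/-- Stability bound with initial data (Proposition 1, bound (2)): under the assumptions on the
Hermitian coercive form `a`, if `Re s > 0`, `φ₀, φ₁ ∈ V` with `a(φ₀, ·) = ⟪h₀, ι ·⟫_H`,
`a(φ₁, ·) = ⟪h₁, ι ·⟫_H` for `h₀, h₁ ∈ H`, `f ∈ H`, and `φ ∈ V` solves
`s² ⟪ι φ, ι v⟫ + a(φ, v) = ⟪f, ι v⟫ + s ⟪ι φ₀, ι v⟫ + ⟪ι φ₁, ι v⟫` for all `v`, then
`‖s ι φ - ι φ₀‖_H ≤ ‖ι φ₁‖_H/|s| + (1/(Re s · min 1 c)) (‖f‖_H + ‖h₀‖_H/|s| + ‖h₁‖_H/|s|²)`.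
Here the paper's pairing `⟪x, y⟫_H` (linear in `x`, conjugate-linear in `y`) is written as
Mathlib's `inner y x`. -/
theorem laplace_domain_stability_data_H
    {V H : Type*} [NormedAddCommGroup V] [InnerProductSpace ℂ V] [CompleteSpace V]
    [NormedAddCommGroup H] [InnerProductSpace ℂ H] [CompleteSpace H]
    (ι : V →L[ℂ] H) (a : V → V → ℂ)
    (ha_add : ∀ u u' v : V, a (u + u') v = a u v + a u' v)
    (ha_smul : ∀ (z : ℂ) (u v : V), a (z • u) v = z * a u v)
    (ha_herm : ∀ u v : V, a u v = starRingEnd ℂ (a v u))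
    (ha_bdd : ∃ C : ℝ, ∀ u v : V, ‖a u v‖ ≤ C * ‖u‖ * ‖v‖)
    (c : ℝ) (hc : 0 < c) (ha_coer : ∀ v : V, c * ‖v‖ ^ 2 ≤ (a v v).re)
    (s : ℂ) (hs : 0 < s.re)
    (φ₀ φ₁ : V) (h₀ h₁ : H)
    (hφ₀ : ∀ v : V, a φ₀ v = (inner ℂ (ι v) h₀ : ℂ))
    (hφ₁ : ∀ v : V, a φ₁ v = (inner ℂ (ι v) h₁ : ℂ))
    (f : H) (φ : V)
    (heq : ∀ v : V, s ^ 2 * (inner ℂ (ι v) (ι φ) : ℂ) + a φ v =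
      (inner ℂ (ι v) f : ℂ) + s * (inner ℂ (ι v) (ι φ₀) : ℂ) + (inner ℂ (ι v) (ι φ₁) : ℂ)) :
    ‖s • (ι φ) - ι φ₀‖ ≤ ‖ι φ₁‖ / ‖s‖ +
      1 / (s.re * min 1 c) *
        (‖f‖ + ‖h₀‖ / ‖s‖ + ‖h₁‖ / ‖s‖ ^ 2) := by

  have hs0 : s ≠ 0 := fun h => by simp [h] at hs
  have habs : 0 < ‖s‖ := norm_pos_iff.mpr hs0
  set w : V := s • φ - φ₀ - s⁻¹ • φ₁ with hw
  set G : H := f - s⁻¹ • h₀ - s⁻¹ ^ 2 • h₁ with hG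
  have ha_neg : ∀ u v : V, a (-u) v = - a u v := by
    intro u v
    have := ha_smul (-1) u v
    simpa using this
  have ha_sub : ∀ u u' v : V, a (u - u') v = a u v - a u' v := by
    intro u u' v
    rw [sub_eq_add_neg, ha_add, ha_neg, sub_eq_add_neg]
  have haw : ∀ v, a w v = s * a φ v - a φ₀ v - s⁻¹ * a φ₁ v := by
    intro v; rw [hw, ha_sub, ha_sub, ha_smul, ha_smul]
  have key : ∀ v : V, s * (inner ℂ (ι v) (ι w) : ℂ) + s⁻¹ * a w v = (inner ℂ (ι v) G : ℂ) := by
    intro v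
    have h1 : (ι w : H) = s • ι φ - ι φ₀ - s⁻¹ • ι φ₁ := by
      simp only [hw, map_sub, ContinuousLinearMap.map_smul]
    rw [h1, hG]
    simp only [inner_sub_right, inner_smul_right, haw, hφ₀ v, hφ₁ v]
    have hinv : s * s⁻¹ = 1 := mul_inv_cancel₀ hs0
    linear_combination heq v + (a φ v - (inner ℂ (ι v) (ι φ₁) : ℂ)) * hinv
  have hww := key w
  -- a w w is real and nonnegative
  have haim : (a w w).im = 0 := by
    have h := ha_herm w w
    have : (a w w).im = -(a w w).im := by
      conv_lhs => rw [h]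
      simp [Complex.conj_im]
    linarith
  have hare : 0 ≤ (a w w).re := le_trans (by positivity) (ha_coer w)
  -- take real parts
  have hself : (inner ℂ (ι w) (ι w) : ℂ) = ((‖ι w‖ ^ 2 : ℝ) : ℂ) := by
    rw [inner_self_eq_norm_sq_to_K]; norm_cast
  have hre : s.re * ‖ι w‖ ^ 2 + (s⁻¹.re * (a w w).re) = (inner ℂ (ι w) G : ℂ).re := by
    have h := congrArg Complex.re hww
    rw [hself] at h
    simp only [Complex.add_re, Complex.mul_re, haim, Complex.ofReal_re, Complex.ofReal_im,
      mul_zero, sub_zero, zero_mul] at h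
    linarith
  have hinvre : 0 ≤ s⁻¹.re := by
    rw [Complex.inv_re]
    exact div_nonneg hs.le (Complex.normSq_nonneg s)
  have hbound : s.re * ‖ι w‖ ^ 2 ≤ ‖ι w‖ * ‖G‖ := by
    have h1 : (inner ℂ (ι w) G : ℂ).re ≤ ‖ι w‖ * ‖G‖ := by
      calc (inner ℂ (ι w) G : ℂ).re ≤ ‖(inner ℂ (ι w) G : ℂ)‖ := Complex.re_le_norm _
        _ ≤ ‖ι w‖ * ‖G‖ := norm_inner_le_norm _ _
    nlinarith [mul_nonneg hinvre hare]
  have hwle : ‖ι w‖ ≤ ‖G‖ / s.re := by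
    rw [le_div_iff₀ hs]
    rcases eq_or_lt_of_le (norm_nonneg (ι w)) with h0 | h0
    · rw [← h0]; simpa using norm_nonneg G
    · nlinarith
  -- norm of G
  have hGle : ‖G‖ ≤ ‖f‖ + ‖h₀‖ / ‖s‖ + ‖h₁‖ / ‖s‖ ^ 2 := by
    rw [hG]
    calc ‖f - s⁻¹ • h₀ - s⁻¹ ^ 2 • h₁‖
        ≤ ‖f - s⁻¹ • h₀‖ + ‖s⁻¹ ^ 2 • h₁‖ := norm_sub_le _ _
      _ ≤ ‖f‖ + ‖s⁻¹ • h₀‖ + ‖s⁻¹ ^ 2 • h₁‖ := by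
          gcongr; exact norm_sub_le _ _
      _ = ‖f‖ + ‖h₀‖ / ‖s‖ + ‖h₁‖ / ‖s‖ ^ 2 := by
          rw [norm_smul, norm_smul, norm_pow, norm_inv]
          simp [div_eq_inv_mul]
  -- decompose goal
  have hdecomp : s • (ι φ) - ι φ₀ = ι w + s⁻¹ • ι φ₁ := by
    simp only [hw, map_sub, ContinuousLinearMap.map_smul]
    abel
  have hmin : 0 < min 1 c := lt_min one_pos hc
  have hminle : min 1 c ≤ 1 := min_le_left _ _
  have hSnn : 0 ≤ ‖f‖ + ‖h₀‖ / ‖s‖ + ‖h₁‖ / ‖s‖ ^ 2 := by positivity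
  calc ‖s • (ι φ) - ι φ₀‖ = ‖ι w + s⁻¹ • ι φ₁‖ := by rw [hdecomp]
    _ ≤ ‖ι w‖ + ‖s⁻¹ • ι φ₁‖ := norm_add_le _ _
    _ = ‖ι w‖ + ‖ι φ₁‖ / ‖s‖ := by
        rw [norm_smul, norm_inv]
        simp [div_eq_inv_mul]
    _ ≤ ‖G‖ / s.re + ‖ι φ₁‖ / ‖s‖ := by gcongr
    _ ≤ ‖ι φ₁‖ / ‖s‖ +
        1 / (s.re * min 1 c) * (‖f‖ + ‖h₀‖ / ‖s‖ + ‖h₁‖ / ‖s‖ ^ 2) := by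
        have h1 : ‖G‖ / s.re ≤ (‖f‖ + ‖h₀‖ / ‖s‖ + ‖h₁‖ / ‖s‖ ^ 2) / s.re := by
          gcongr
        have h2 : (‖f‖ + ‖h₀‖ / ‖s‖ + ‖h₁‖ / ‖s‖ ^ 2) / s.re ≤
            1 / (s.re * min 1 c) * (‖f‖ + ‖h₀‖ / ‖s‖ + ‖h₁‖ / ‖s‖ ^ 2) := by
          rw [div_eq_inv_mul, one_div]
          gcongr
          nlinarith
        linarith
end

section
/- Let s be a complex number with Re(s) > 0 and assume moreover that a is continuous with constant C_A, i.e. |a(u,v)| ≤ C_A·‖u‖_V·‖v‖_V for all u, v ∈ V. Let φ₀, φ₁ ∈ V with h₀, h₁ ∈ H satisfying a(φ₀, v) = ⟪h₀, ι v⟫_H and a(φ₁, v) = ⟪h₁, ι v⟫_H for all v ∈ V, let f ∈ H, and suppose φ ∈ V satisfies s²·⟪ι φ, ι v⟫_H + a(φ, v) = ⟪f, ι v⟫_H + s·⟪ι φ₀, ι v⟫_H + ⟪ι φ₁, ι v⟫_H for all v ∈ V. Then for every v ∈ V, |s²·⟪ι φ, ι v⟫_H − s·⟪ι φ₀, ι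 v⟫_H − ⟪ι φ₁, ι v⟫_H| ≤ ( ‖f‖_{V*} + C_A·(‖φ₀‖_V/|s| + ‖φ₁‖_V/|s|²) + (C_A/(Re(s)·min(1, c)))·(‖f‖_H + ‖h₀‖_H/|s| + ‖h₁‖_H/|s|²) )·‖v‖_V, where ‖f‖_{V*} denotes the supremum of |⟪f, ι v⟫_H|/‖v‖_V over nonzero v ∈ V. -/
open MeasureTheory

set_option maxHeartbeats 1600000 in
/-- Dual-norm stability bound (Proposition 1, bound (3)): under the assumptions on the
Hermitian coercive form `a`, continuous with constant `C_A`, if `Re s > 0`, `φ₀, φ₁ ∈ V`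
with `a(φ₀, ·) = ⟪h₀, ι ·⟫_H`, `a(φ₁, ·) = ⟪h₁, ι ·⟫_H`, `f ∈ H`, and `φ ∈ V` solves
`s² ⟪ι φ, ι v⟫ + a(φ, v) = ⟪f, ι v⟫ + s ⟪ι φ₀, ι v⟫ + ⟪ι φ₁, ι v⟫` for all `v`, then for
every `v`, `|s² ⟪ι φ, ι v⟫ - s ⟪ι φ₀, ι v⟫ - ⟪ι φ₁, ι v⟫|` is bounded by
`(‖f‖_{V*} + C_A (‖φ₀‖/|s| + ‖φ₁‖/|s|²) + (C_A/(Re s · min 1 c)) (‖f‖ + ‖h₀‖/|s| + ‖h₁‖/|s|²)) ‖v‖`,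
where `‖f‖_{V*} = ⨆_{w ≠ 0} |⟪f, ι w⟫|/‖w‖`.  Here the paper's pairing `⟪x, y⟫_H`
(linear in `x`, conjugate-linear in `y`) is written as Mathlib's `inner y x`. -/
theorem laplace_domain_stability_data_dual
    {V H : Type*} [NormedAddCommGroup V] [InnerProductSpace ℂ V] [CompleteSpace V]
    [NormedAddCommGroup H] [InnerProductSpace ℂ H] [CompleteSpace H]
    (ι : V →L[ℂ] H) (a : V → V → ℂ)
    (ha_add : ∀ u u' v : V, a (u + u') v = a u v + a u' v)
    (ha_smul : ∀ (z : ℂ) (u v : V), a (z • u) v = z * a u v)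
    (ha_herm : ∀ u v : V, a u v = starRingEnd ℂ (a v u))
    (c : ℝ) (hc : 0 < c) (ha_coer : ∀ v : V, c * ‖v‖ ^ 2 ≤ (a v v).re)
    (CA : ℝ) (ha_cont : ∀ u v : V, ‖a u v‖ ≤ CA * ‖u‖ * ‖v‖)
    (s : ℂ) (hs : 0 < s.re)
    (φ₀ φ₁ : V) (h₀ h₁ : H)
    (hφ₀ : ∀ v : V, a φ₀ v = (inner ℂ (ι v) h₀ : ℂ))
    (hφ₁ : ∀ v : V, a φ₁ v = (inner ℂ (ι v) h₁ : ℂ))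
    (f : H) (φ : V)
    (heq : ∀ v : V, s ^ 2 * (inner ℂ (ι v) (ι φ) : ℂ) + a φ v =
      (inner ℂ (ι v) f : ℂ) + s * (inner ℂ (ι v) (ι φ₀) : ℂ) + (inner ℂ (ι v) (ι φ₁) : ℂ)) :
    ∀ v : V,
      ‖s ^ 2 * (inner ℂ (ι v) (ι φ) : ℂ) - s * (inner ℂ (ι v) (ι φ₀) : ℂ) -
          (inner ℂ (ι v) (ι φ₁) : ℂ)‖ ≤
        ((⨆ w : {w : V // w ≠ 0}, ‖(inner ℂ (ι (w : V)) f : ℂ)‖ / ‖(w : V)‖) +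
            CA * (‖φ₀‖ / ‖s‖ + ‖φ₁‖ / ‖s‖ ^ 2) +
            CA / (s.re * min 1 c) *
              (‖f‖ + ‖h₀‖ / ‖s‖ + ‖h₁‖ / ‖s‖ ^ 2)) * ‖v‖ := by
  intro v
  have hs0 : s ≠ 0 := fun h => by simp [h] at hs
  have hA : 0 < ‖s‖ := by simpa [norm_pos_iff] using hs0
  rcases eq_or_ne v 0 with rfl | hv
  · simp
  have hvpos : 0 < ‖v‖ := norm_pos_iff.mpr hv
  set ψ : V := φ + (-s⁻¹) • φ₀ + (-(s⁻¹ ^ 2)) • φ₁ with hψdef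
  set g : H := f + (-s⁻¹) • h₀ + (-(s⁻¹ ^ 2)) • h₁ with hgdef
  -- key identity
  have key : ∀ w : V, s ^ 2 * (inner ℂ (ι w) (ι ψ) : ℂ) + a ψ w = (inner ℂ (ι w) g : ℂ) := by
    intro w
    have haψ : a ψ w = a φ w + (-s⁻¹) * a φ₀ w + (-(s⁻¹ ^ 2)) * a φ₁ w := by
      rw [hψdef, ha_add, ha_add, ha_smul, ha_smul]
    have hinψ : (inner ℂ (ι w) (ι ψ) : ℂ) =
        (inner ℂ (ι w) (ι φ) : ℂ) + (-s⁻¹) * (inner ℂ (ι w) (ι φ₀) : ℂ) +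
          (-(s⁻¹ ^ 2)) * (inner ℂ (ι w) (ι φ₁) : ℂ) := by
      simp [hψdef, inner_add_right, inner_smul_right]
    have hing : (inner ℂ (ι w) g : ℂ) =
        (inner ℂ (ι w) f : ℂ) + (-s⁻¹) * (inner ℂ (ι w) h₀ : ℂ) +
          (-(s⁻¹ ^ 2)) * (inner ℂ (ι w) h₁ : ℂ) := by
      simp [hgdef, inner_add_right, inner_smul_right]
    have h1 := heq w
    have h2 := hφ₀ w
    have h3 := hφ₁ w
    rw [haψ, hinψ, hing, h2, h3]
    have hu : s * s⁻¹ = 1 := mul_inv_cancel₀ hs0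
    linear_combination h1 - (s * (inner ℂ (ι w) (ι φ₀) : ℂ) + (1 + s * s⁻¹) * (inner ℂ (ι w) (ι φ₁) : ℂ)) * hu
  -- energy estimate
  set r : ℝ := s.re with hrdef
  set m : ℝ := min 1 c with hmdef
  have hm : 0 < m := lt_min one_pos hc
  have hrm : 0 < r * m := mul_pos hs hm
  set A : ℝ := ‖s‖ with hAdef
  set X : ℝ := ‖ι ψ‖ with hXdef
  set Y : ℝ := ‖ψ‖ with hYdef
  set G : ℝ := ‖g‖ with hGdef
  have hψnorm : Y ≤ G / (r * m) := by
    have h1 := key ψ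
    have him : (a ψ ψ).im = 0 := by
      have := ha_herm ψ ψ
      have h2 : (a ψ ψ).im = -(a ψ ψ).im := by
        conv_lhs => rw [this]
        simp
      linarith
    have hself : (inner ℂ (ι ψ) (ι ψ) : ℂ) = ((X ^ 2 : ℝ) : ℂ) := by
      rw [hXdef]
      push_cast
      exact inner_self_eq_norm_sq_to_K (𝕜 := ℂ) (ι ψ)
    have hre : r * (A ^ 2 * X ^ 2 + (a ψ ψ).re) ≤ A * X * G := by
      have e1 : (starRingEnd ℂ s * (s ^ 2 * ((X ^ 2 : ℝ) : ℂ) + a ψ ψ)).re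
          = r * (A ^ 2 * X ^ 2 + (a ψ ψ).re) := by
        simp [Complex.mul_re, Complex.mul_im, Complex.add_re, Complex.add_im, pow_two,
          him, hrdef, hAdef]
        rw [show ‖s‖ * ‖s‖ = s.re * s.re + s.im * s.im from by
          rw [← sq, Complex.sq_norm, Complex.normSq_apply]]
        ring
      have e2 : (starRingEnd ℂ s * (inner ℂ (ι ψ) g : ℂ)).re ≤ A * X * G := by
        calc (starRingEnd ℂ s * (inner ℂ (ι ψ) g : ℂ)).re
            ≤ ‖starRingEnd ℂ s * (inner ℂ (ι ψ) g : ℂ)‖ := Complex.re_le_norm _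
          _ = A * ‖(inner ℂ (ι ψ) g : ℂ)‖ := by
              rw [norm_mul, Complex.norm_conj]
          _ ≤ A * (X * G) := by
              gcongr
              simpa using norm_inner_le_norm (𝕜 := ℂ) (ι ψ) g
          _ = A * X * G := by ring
      calc r * (A ^ 2 * X ^ 2 + (a ψ ψ).re)
          = (starRingEnd ℂ s * (s ^ 2 * ((X ^ 2 : ℝ) : ℂ) + a ψ ψ)).re := e1.symm
        _ = (starRingEnd ℂ s * (inner ℂ (ι ψ) g : ℂ)).re := by rw [← hself, h1]
        _ ≤ A * X * G := e2
    have hcoY : c * Y ^ 2 ≤ (a ψ ψ).re := ha_coer ψ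
    have hX0 : (0:ℝ) ≤ X := norm_nonneg _
    have hY0 : (0:ℝ) ≤ Y := norm_nonneg _
    have hG0 : (0:ℝ) ≤ G := norm_nonneg _
    have hm1 : m ≤ 1 := min_le_left _ _
    have hmc : m ≤ c := min_le_right _ _
    have hstep : r * m * (A ^ 2 * X ^ 2 + Y ^ 2) ≤ A * X * G := by
      nlinarith [mul_le_mul_of_nonneg_left hcoY hs.le,
        mul_le_mul_of_nonneg_right (mul_le_mul_of_nonneg_left hm1 hs.le)
          (by positivity : (0:ℝ) ≤ A ^ 2 * X ^ 2),
        mul_le_mul_of_nonneg_right (mul_le_mul_of_nonneg_left hmc hs.le) (sq_nonneg Y)]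
    have hq : (2 * (r * m) * Y) ^ 2 ≤ G ^ 2 := by
      have h1' := mul_le_mul_of_nonneg_left hstep (by positivity : (0:ℝ) ≤ 4 * (r * m))
      nlinarith [sq_nonneg (2 * (r * m) * A * X - G)]
    have hq2 : 2 * (r * m) * Y ≤ G := by
      have hu : (0:ℝ) ≤ 2 * (r * m) * Y := by positivity
      exact (pow_le_pow_iff_left₀ hu hG0 two_ne_zero).mp hq
    rw [le_div_iff₀ hrm]
    linarith [hq2, mul_nonneg (mul_nonneg hs.le hm.le) hY0]
  -- bounds on g and φ norms
  have hAinv : ‖(s⁻¹ : ℂ)‖ = 1 / A := by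
    rw [norm_inv, one_div, hAdef]
  have hAinv2 : ‖(s⁻¹ ^ 2 : ℂ)‖ = 1 / A ^ 2 := by
    rw [norm_pow, norm_inv, hAdef]; field_simp
  have hg : G ≤ ‖f‖ + ‖h₀‖ / A + ‖h₁‖ / A ^ 2 := by
    calc G ≤ ‖f + (-s⁻¹) • h₀‖ + ‖(-(s⁻¹ ^ 2)) • h₁‖ := norm_add_le _ _
      _ ≤ (‖f‖ + ‖(-s⁻¹) • h₀‖) + ‖(-(s⁻¹ ^ 2)) • h₁‖ := by gcongr; exact norm_add_le _ _
      _ = ‖f‖ + ‖h₀‖ / A + ‖h₁‖ / A ^ 2 := by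
          rw [norm_smul, norm_smul, norm_neg, norm_neg, hAinv, hAinv2]; ring
  have hφnorm : ‖φ‖ ≤ Y + ‖φ₀‖ / A + ‖φ₁‖ / A ^ 2 := by
    have : φ = ψ + s⁻¹ • φ₀ + (s⁻¹ ^ 2) • φ₁ := by
      rw [hψdef]; abel_nf; simp [← sub_smul]
    calc ‖φ‖ = ‖ψ + s⁻¹ • φ₀ + (s⁻¹ ^ 2) • φ₁‖ := by rw [← this]
      _ ≤ ‖ψ + s⁻¹ • φ₀‖ + ‖(s⁻¹ ^ 2) • φ₁‖ := norm_add_le _ _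
      _ ≤ (Y + ‖s⁻¹ • φ₀‖) + ‖(s⁻¹ ^ 2) • φ₁‖ := by gcongr; exact norm_add_le _ _
      _ = Y + ‖φ₀‖ / A + ‖φ₁‖ / A ^ 2 := by
          rw [norm_smul, norm_smul, hAinv, hAinv2]; ring
  -- CA positive
  have hCA : 0 < CA := by
    have h1 := ha_cont v v
    have h2 := ha_coer v
    have h3 : (a v v).re ≤ ‖a v v‖ := by
      exact Complex.re_le_norm _
    have h4 : c * ‖v‖ ^ 2 ≤ CA * ‖v‖ ^ 2 := by
      calc c * ‖v‖ ^ 2 ≤ (a v v).re := h2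
        _ ≤ ‖a v v‖ := h3
        _ ≤ CA * ‖v‖ * ‖v‖ := h1
        _ = CA * ‖v‖ ^ 2 := by ring
    exact hc.trans_le (le_of_mul_le_mul_right h4 (by positivity))
  -- dual norm bound
  set S : ℝ := ⨆ w : {w : V // w ≠ 0}, ‖(inner ℂ (ι (w : V)) f : ℂ)‖ / ‖(w : V)‖
    with hSdef
  have hF : ‖(inner ℂ (ι v) f : ℂ)‖ ≤ S * ‖v‖ := by
    have hbdd : BddAbove (Set.range fun w : {w : V // w ≠ 0} =>
        ‖(inner ℂ (ι (w : V)) f : ℂ)‖ / ‖(w : V)‖) := by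
      refine ⟨‖ι‖ * ‖f‖, ?_⟩
      rintro x ⟨w, rfl⟩
      have hw : 0 < ‖(w : V)‖ := norm_pos_iff.mpr w.2
      rw [div_le_iff₀ hw]
      calc ‖(inner ℂ (ι (w : V)) f : ℂ)‖ ≤ ‖ι (w : V)‖ * ‖f‖ := by
            simpa using norm_inner_le_norm (𝕜 := ℂ) (ι (w : V)) f
        _ ≤ ‖ι‖ * ‖(w : V)‖ * ‖f‖ := by gcongr; exact ι.le_opNorm _
        _ = ‖ι‖ * ‖f‖ * ‖(w : V)‖ := by ring
    have hle : ‖(inner ℂ (ι v) f : ℂ)‖ / ‖v‖ ≤ S :=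
      le_ciSup hbdd ⟨v, hv⟩
    calc ‖(inner ℂ (ι v) f : ℂ)‖
        = ‖(inner ℂ (ι v) f : ℂ)‖ / ‖v‖ * ‖v‖ := by field_simp
      _ ≤ S * ‖v‖ := by gcongr
  -- the form bound
  have haφv : ‖a φ v‖ ≤
      (CA * (‖φ₀‖ / A + ‖φ₁‖ / A ^ 2) + CA / (r * m) * (‖f‖ + ‖h₀‖ / A + ‖h₁‖ / A ^ 2)) * ‖v‖ := by
    have h1 : ‖a φ v‖ ≤ CA * ‖φ‖ * ‖v‖ := by
      simpa using ha_cont φ v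
    have h2 : CA * ‖φ‖ ≤ CA * (‖φ₀‖ / A + ‖φ₁‖ / A ^ 2) +
        CA / (r * m) * (‖f‖ + ‖h₀‖ / A + ‖h₁‖ / A ^ 2) := by
      have hYb : Y ≤ (‖f‖ + ‖h₀‖ / A + ‖h₁‖ / A ^ 2) / (r * m) :=
        hψnorm.trans (by gcongr)
      have h3 : ‖φ‖ ≤ (‖f‖ + ‖h₀‖ / A + ‖h₁‖ / A ^ 2) / (r * m) + (‖φ₀‖ / A + ‖φ₁‖ / A ^ 2) := by
        linarith [hφnorm]
      calc CA * ‖φ‖ ≤ CA * ((‖f‖ + ‖h₀‖ / A + ‖h₁‖ / A ^ 2) / (r * m)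
            + (‖φ₀‖ / A + ‖φ₁‖ / A ^ 2)) := by gcongr
        _ = CA * (‖φ₀‖ / A + ‖φ₁‖ / A ^ 2) +
            CA / (r * m) * (‖f‖ + ‖h₀‖ / A + ‖h₁‖ / A ^ 2) := by field_simp; ring
    calc ‖a φ v‖ ≤ CA * ‖φ‖ * ‖v‖ := h1
      _ ≤ (CA * (‖φ₀‖ / A + ‖φ₁‖ / A ^ 2) + CA / (r * m) * (‖f‖ + ‖h₀‖ / A + ‖h₁‖ / A ^ 2)) * ‖v‖ := by
          gcongr
  -- combine
  have hmain : s ^ 2 * (inner ℂ (ι v) (ι φ) : ℂ) - s * (inner ℂ (ι v) (ι φ₀) : ℂ) -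
      (inner ℂ (ι v) (ι φ₁) : ℂ) = (inner ℂ (ι v) f : ℂ) - a φ v := by
    linear_combination heq v
  rw [hmain]
  calc ‖(inner ℂ (ι v) f : ℂ) - a φ v‖
      ≤ ‖(inner ℂ (ι v) f : ℂ)‖ + ‖a φ v‖ := by
        simpa using norm_sub_le ((inner ℂ (ι v) f : ℂ)) (a φ v)
    _ ≤ S * ‖v‖ + (CA * (‖φ₀‖ / A + ‖φ₁‖ / A ^ 2)
        + CA / (r * m) * (‖f‖ + ‖h₀‖ / A + ‖h₁‖ / A ^ 2)) * ‖v‖ := by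
        exact add_le_add hF haφv
    _ = (S + CA * (‖φ₀‖ / A + ‖φ₁‖ / A ^ 2)
        + CA / (r * m) * (‖f‖ + ‖h₀‖ / A + ‖h₁‖ / A ^ 2)) * ‖v‖ := by ring
end

section
/- Let s be a complex number with Re(s) > 0. Let p ∈ V and suppose there is h ∈ H with a(p, v) = ⟪h, ι v⟫_H for all v ∈ V. Suppose w ∈ V satisfies, for all v ∈ V, s²·⟪ι w, ι v⟫_H + a(w, v) = ( −∫_{−∞}^0 q''(t)·exp(−s·t) dt + s·q(0) + q'(0) )·⟪ι p, ι v⟫_H. Then ‖w‖_V ≤ (1/|s|²)·( ‖p‖_V + ‖h‖_H/(Re(s)·min(1, c)) )·∫_{−∞}^0 |q''(t)|·exp(−Re(s)·t) dt + ( ‖p‖_V + ‖h‖_H/(Re(s)·min(1, c)) )·( |q(0)|/|s| + |q'(0)|/|s|² ). -/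
open MeasureTheory

set_option maxHeartbeats 1000000

/-- Consistency error bound (Lemma on `w = L{∂²ₜu}(s) - Û⁽²⁾(s)`): with the Ricker wavelet
`q(t) = (1 - (α²/2)(t - t₀)²) exp (-(α²/4)(t - t₀)²)`, `Re s > 0`, `p ∈ V` with
`a(p, ·) = ⟪h, ι ·⟫_H` for some `h ∈ H`, if `w ∈ V` satisfies for all `v`
`s² ⟪ι w, ι v⟫_H + a(w, v) = (-∫_{-∞}^0 q''(t) e^{-s t} dt + s q(0) + q'(0)) ⟪ι p, ι v⟫_H`,
then `‖w‖_V ≤ (1/|s|²)(‖p‖_V + ‖h‖_H/(Re s · min 1 c)) ∫_{-∞}^0 |q''(t)| e^{-Re s · t} dt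
+ (‖p‖_V + ‖h‖_H/(Re s · min 1 c))(|q 0|/|s| + |q' 0|/|s|²)`.
Here the paper's pairing `⟪x, y⟫_H` (linear in `x`, conjugate-linear in `y`) is written as
Mathlib's `inner y x`. -/
theorem consistency_error_bound
    {V H : Type*} [NormedAddCommGroup V] [InnerProductSpace ℂ V] [CompleteSpace V]
    [NormedAddCommGroup H] [InnerProductSpace ℂ H] [CompleteSpace H]
    (ι : V →L[ℂ] H) (a : V → V → ℂ)
    (ha_add : ∀ u u' v : V, a (u + u') v = a u v + a u' v)
    (ha_smul : ∀ (z : ℂ) (u v : V), a (z • u) v = z * a u v)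
    (ha_herm : ∀ u v : V, a u v = starRingEnd ℂ (a v u))
    (ha_bdd : ∃ C : ℝ, ∀ u v : V, ‖a u v‖ ≤ C * ‖u‖ * ‖v‖)
    (c : ℝ) (hc : 0 < c) (ha_coer : ∀ v : V, c * ‖v‖ ^ 2 ≤ (a v v).re)
    (α t₀ : ℝ) (hα : 0 < α) (ht₀ : 0 < t₀)
    (s : ℂ) (hs : 0 < s.re)
    (q : ℝ → ℝ)
    (hq : q = fun u : ℝ =>
      (1 - α ^ 2 / 2 * (u - t₀) ^ 2) * Real.exp (-(α ^ 2 / 4) * (u - t₀) ^ 2))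
    (p : V) (h : H)
    (hp : ∀ v : V, a p v = (inner ℂ (ι v) h : ℂ))
    (w : V)
    (hw : ∀ v : V, s ^ 2 * (inner ℂ (ι v) (ι w) : ℂ) + a w v =
      (-(∫ t in Set.Iic (0 : ℝ), ((deriv (deriv q) t : ℝ) : ℂ) * Complex.exp (-s * (t : ℂ))) +
          s * ((q 0 : ℝ) : ℂ) + ((deriv q 0 : ℝ) : ℂ)) * (inner ℂ (ι v) (ι p) : ℂ)) :
    ‖w‖ ≤ 1 / ‖s‖ ^ 2 * (‖p‖ + ‖h‖ / (s.re * min 1 c)) *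
        (∫ t in Set.Iic (0 : ℝ), |deriv (deriv q) t| * Real.exp (-s.re * t)) +
      (‖p‖ + ‖h‖ / (s.re * min 1 c)) *
        (|q 0| / ‖s‖ + |deriv q 0| / ‖s‖ ^ 2) := by

  have hs0 : s ≠ 0 := fun h0 => by simp [h0] at hs
  have hs2 : s ^ 2 ≠ 0 := pow_ne_zero _ hs0
  have hA : 0 < ‖s‖ := norm_pos_iff.mpr hs0
  have hmin : 0 < min 1 c := lt_min one_pos hc
  have hm : 0 < s.re * min 1 c := mul_pos hs hmin
  set K : ℂ := -(∫ t in Set.Iic (0 : ℝ), ((deriv (deriv q) t : ℝ) : ℂ) *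
      Complex.exp (-s * (t : ℂ))) + s * ((q 0 : ℝ) : ℂ) + ((deriv q 0 : ℝ) : ℂ) with hK
  set z : ℂ := K / s ^ 2 with hz
  set e : V := w - z • p with he
  have heq : ∀ v : V, s ^ 2 * (inner ℂ (ι v) (ι e) : ℂ) + a e v
      = -(z * (inner ℂ (ι v) h : ℂ)) := by
    intro v
    have h1 : a e v = a w v - z * a p v := by
      rw [he, sub_eq_add_neg, ← neg_smul, ha_add, ha_smul]; ring
    have h2 : (inner ℂ (ι v) (ι e) : ℂ) = inner ℂ (ι v) (ι w) - z * inner ℂ (ι v) (ι p) := by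
      rw [he]; simp [inner_sub_right, inner_smul_right]
    have h3 := hw v
    have h4 := hp v
    have h5 : (K / s ^ 2) * s ^ 2 = K := div_mul_cancel₀ K hs2
    rw [h1, h2, h4]
    calc s ^ 2 * ((inner ℂ (ι v) (ι w) : ℂ) - z * inner ℂ (ι v) (ι p))
        + (a w v - z * inner ℂ (ι v) h)
        = (s ^ 2 * inner ℂ (ι v) (ι w) + a w v)
          - z * (s ^ 2 * inner ℂ (ι v) (ι p)) - z * inner ℂ (ι v) h := by ring
      _ = K * inner ℂ (ι v) (ι p) - z * (s ^ 2 * inner ℂ (ι v) (ι p)) - z * inner ℂ (ι v) h := by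
          rw [h3]
      _ = (K - z * s ^ 2) * inner ℂ (ι v) (ι p) - z * inner ℂ (ι v) h := by ring
      _ = -(z * inner ℂ (ι v) h) := by rw [hz, h5]; ring
  have hE := heq e
  have hself : (inner ℂ (ι e) (ι e) : ℂ) = ((‖ι e‖ : ℝ) : ℂ) ^ 2 := by
    rw [inner_self_eq_norm_sq_to_K]; norm_cast
  rw [hself] at hE
  have hTim : (a e e).im = 0 := by
    have h1 := congrArg Complex.im (ha_herm e e)
    simp only [Complex.conj_im] at h1
    linarith
  have hTre : a e e = (((a e e).re : ℝ) : ℂ) := by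
    apply Complex.ext <;> simp [hTim]
  set T : ℝ := (a e e).re with hT
  set X : ℝ := ‖ι e‖ with hX
  set Y : ℝ := ‖e‖ with hY
  set A : ℝ := ‖s‖ with hA'
  rw [hTre] at hE
  -- multiply by conj s and take real parts
  have key : s.re * (A ^ 2 * X ^ 2 + T) ≤ A * (‖z‖ * (‖h‖ * X)) := by
    have h1 : s.re * (A ^ 2 * X ^ 2 + T)
        = (starRingEnd ℂ s * (s ^ 2 * ((X : ℝ) : ℂ) ^ 2 + ((T : ℝ) : ℂ))).re := by
      have hnsq : A ^ 2 = Complex.normSq s := by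
        rw [hA', Complex.sq_norm]
      rw [hnsq]
      simp [Complex.mul_re, Complex.mul_im, Complex.normSq_apply, pow_two]
      ring
    rw [h1, hE]
    calc (starRingEnd ℂ s * -(z * (inner ℂ (ι e) h : ℂ))).re
        ≤ ‖starRingEnd ℂ s * -(z * (inner ℂ (ι e) h : ℂ))‖ := Complex.re_le_norm _
      _ = A * (‖z‖ * ‖(inner ℂ (ι e) h : ℂ)‖) := by
          simp [norm_mul, hA']
      _ ≤ A * (‖z‖ * (‖ι e‖ * ‖h‖)) := by
          gcongr
          simpa using norm_inner_le_norm (𝕜 := ℂ) (ι e) h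
      _ = A * (‖z‖ * (‖h‖ * X)) := by rw [hX]; ring
  have hcoe : c * Y ^ 2 ≤ T := ha_coer e
  set m : ℝ := s.re * min 1 c with hmdef
  have hG0 : 0 ≤ ‖z‖ * ‖h‖ := mul_nonneg (norm_nonneg _) (norm_nonneg _)
  have hX0 : 0 ≤ X := norm_nonneg _
  have hY0 : 0 ≤ Y := norm_nonneg _
  have hineq : m * ((A * X) ^ 2 + Y ^ 2) ≤ ‖z‖ * ‖h‖ * (A * X) := by
    have h1 : min 1 c ≤ 1 := min_le_left _ _
    have h2 : min 1 c ≤ c := min_le_right _ _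
    have e1 : m * (A * X) ^ 2 ≤ s.re * (A ^ 2 * X ^ 2) := by
      nlinarith [mul_nonneg (mul_nonneg hs.le (sub_nonneg.mpr h1)) (sq_nonneg (A * X))]
    have e2 : m * Y ^ 2 ≤ s.re * T := by
      nlinarith [mul_le_mul_of_nonneg_left hcoe hs.le,
        mul_nonneg (mul_nonneg hs.le (sub_nonneg.mpr h2)) (sq_nonneg Y)]
    nlinarith [e1, e2, key]
  have hsq : (2 * m * Y) ^ 2 ≤ (‖z‖ * ‖h‖) ^ 2 := by
    nlinarith [sq_nonneg (‖z‖ * ‖h‖ - 2 * m * (A * X)),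
      mul_le_mul_of_nonneg_left hineq hm.le]
  have hYle : m * Y ≤ ‖z‖ * ‖h‖ := by nlinarith [hsq, hm, hY0, hG0]
  have hYbound : Y ≤ ‖z‖ * (‖h‖ / m) := by
    rw [mul_div_assoc', le_div_iff₀ hm]
    nlinarith [hYle]
  have hwle : ‖w‖ ≤ ‖z‖ * (‖p‖ + ‖h‖ / m) := by
    have h1 : w = e + z • p := by rw [he]; abel
    calc ‖w‖ = ‖e + z • p‖ := by rw [← h1]
      _ ≤ ‖e‖ + ‖z • p‖ := norm_add_le _ _
      _ = Y + ‖z‖ * ‖p‖ := by rw [norm_smul]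
      _ ≤ ‖z‖ * (‖h‖ / m) + ‖z‖ * ‖p‖ := by linarith [hYbound]
      _ = ‖z‖ * (‖p‖ + ‖h‖ / m) := by ring
  set I : ℝ := ∫ t in Set.Iic (0 : ℝ), |deriv (deriv q) t| * Real.exp (-s.re * t) with hI
  have hInt : ‖∫ t in Set.Iic (0 : ℝ), ((deriv (deriv q) t : ℝ) : ℂ) *
      Complex.exp (-s * (t : ℂ))‖ ≤ I := by
    calc ‖∫ t in Set.Iic (0 : ℝ), ((deriv (deriv q) t : ℝ) : ℂ) * Complex.exp (-s * (t : ℂ))‖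
        ≤ ∫ t in Set.Iic (0 : ℝ), ‖((deriv (deriv q) t : ℝ) : ℂ) * Complex.exp (-s * (t : ℂ))‖ :=
          norm_integral_le_integral_norm _
      _ = I := by
          rw [hI]
          apply integral_congr_ae
          filter_upwards with t
          rw [norm_mul, Complex.norm_real, Complex.norm_exp]
          congr 1
          simp [Complex.mul_re]
  have hKb : ‖K‖ ≤ I + A * |q 0| + |deriv q 0| := by
    rw [hK]
    calc ‖-(∫ t in Set.Iic (0 : ℝ), ((deriv (deriv q) t : ℝ) : ℂ) *
          Complex.exp (-s * (t : ℂ))) + s * ((q 0 : ℝ) : ℂ) + ((deriv q 0 : ℝ) : ℂ)‖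
        ≤ ‖-(∫ t in Set.Iic (0 : ℝ), ((deriv (deriv q) t : ℝ) : ℂ) *
            Complex.exp (-s * (t : ℂ))) + s * ((q 0 : ℝ) : ℂ)‖
          + ‖((deriv q 0 : ℝ) : ℂ)‖ := norm_add_le _ _
      _ ≤ ‖-(∫ t in Set.Iic (0 : ℝ), ((deriv (deriv q) t : ℝ) : ℂ) *
            Complex.exp (-s * (t : ℂ)))‖
          + ‖s * ((q 0 : ℝ) : ℂ)‖ + ‖((deriv q 0 : ℝ) : ℂ)‖ := by
          gcongr
          exact norm_add_le _ _
      _ ≤ I + A * |q 0| + |deriv q 0| := by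
          rw [norm_neg, norm_mul, Complex.norm_real, Complex.norm_real, Real.norm_eq_abs, Real.norm_eq_abs]
          gcongr
  have hzabs : ‖z‖ = ‖K‖ / A ^ 2 := by
    rw [hz, norm_div, norm_pow, hA']
  have hP0 : 0 ≤ ‖p‖ + ‖h‖ / m := by positivity
  calc ‖w‖ ≤ ‖z‖ * (‖p‖ + ‖h‖ / m) := hwle
    _ = ‖K‖ / A ^ 2 * (‖p‖ + ‖h‖ / m) := by rw [hzabs]
    _ ≤ (I + A * |q 0| + |deriv q 0|) / A ^ 2 * (‖p‖ + ‖h‖ / m) := by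
        gcongr
    _ = 1 / A ^ 2 * (‖p‖ + ‖h‖ / m) * I +
        (‖p‖ + ‖h‖ / m) * (|q 0| / A + |deriv q 0| / A ^ 2) := by
        field_simp
        ring
end

section
/- Let T > 0. Let η : ℝ → V be twice continuously differentiable with η(0) = 0 and η'(0) = 0, let r : ℝ → H be continuous, and suppose that for all t ∈ [0, T] the energy identity ⟪ι(η''(t)), ι(η'(t))⟫_H + a(η(t), η'(t)) = ⟪r(t), ι(η'(t))⟫_H holds. Then (∫_0^T ‖ι(η'(t))‖_H² dt)^{1/2} + (∫_0^T ‖η(t)‖_V² dt)^{1/2} ≤ (2·T / min(√2/2, √c)) · (∫_0^T ‖r(t)‖_H² dt)^{1/2}. -/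
open MeasureTheory

set_option maxHeartbeats 2000000 in
/-- Energy estimate for the reduced semi-discrete wave problem: let `a` be a bounded
symmetric coercive bilinear form on a real Hilbert space `V`, `ι : V → H` continuous linear,
`T > 0`, `η : ℝ → V` twice continuously differentiable with `η 0 = 0`, `η' 0 = 0`,
`r : ℝ → H` continuous, and suppose the energy identity
`⟪ι η''(t), ι η'(t)⟫_H + a(η(t), η'(t)) = ⟪r(t), ι η'(t)⟫_H` holds for `t ∈ [0, T]`. Then
`(∫₀ᵀ ‖ι η'‖²)^{1/2} + (∫₀ᵀ ‖η‖²)^{1/2} ≤ (2T/min(√2/2, √c)) (∫₀ᵀ ‖r‖²)^{1/2}`. -/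
theorem energy_estimate
    {V H : Type*} [NormedAddCommGroup V] [InnerProductSpace ℝ V] [CompleteSpace V]
    [NormedAddCommGroup H] [InnerProductSpace ℝ H] [CompleteSpace H]
    (ι : V →L[ℝ] H) (a : V → V → ℝ)
    (ha_add : ∀ u u' v : V, a (u + u') v = a u v + a u' v)
    (ha_smul : ∀ (x : ℝ) (u v : V), a (x • u) v = x * a u v)
    (ha_symm : ∀ u v : V, a u v = a v u)
    (ha_bdd : ∃ C : ℝ, ∀ u v : V, |a u v| ≤ C * ‖u‖ * ‖v‖)
    (c : ℝ) (hc : 0 < c) (ha_coer : ∀ v : V, c * ‖v‖ ^ 2 ≤ a v v)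
    (T : ℝ) (hT : 0 < T)
    (η : ℝ → V) (hη : ContDiff ℝ 2 η) (hη0 : η 0 = 0) (hη'0 : deriv η 0 = 0)
    (r : ℝ → H) (hr : Continuous r)
    (henergy : ∀ t ∈ Set.Icc (0 : ℝ) T,
      (inner ℝ (ι (deriv (deriv η) t)) (ι (deriv η t)) : ℝ) + a (η t) (deriv η t) =
        (inner ℝ (r t) (ι (deriv η t)) : ℝ)) :
    Real.sqrt (∫ t in (0 : ℝ)..T, ‖ι (deriv η t)‖ ^ 2) +
        Real.sqrt (∫ t in (0 : ℝ)..T, ‖η t‖ ^ 2) ≤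
      2 * T / min (Real.sqrt 2 / 2) (Real.sqrt c) *
        Real.sqrt (∫ t in (0 : ℝ)..T, ‖r t‖ ^ 2) := by
  obtain ⟨C, hC⟩ := ha_bdd
  obtain ⟨η1, hη1def⟩ : ∃ f : ℝ → V, f = deriv η := ⟨_, rfl⟩
  obtain ⟨η2, hη2def⟩ : ∃ f : ℝ → V, f = deriv η1 := ⟨_, rfl⟩
  rw [← hη1def] at henergy hη'0 ⊢
  rw [← hη2def] at henergy
  -- regularity
  have h2 : ContDiff ℝ ((1 : ℕ) + 1) η := by norm_num [hη]
  obtain ⟨hd1, -, hc1⟩ := contDiff_succ_iff_deriv.mp h2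
  have h1 : ContDiff ℝ ((0 : ℕ) + 1) η1 := by rw [hη1def]; exact_mod_cast hc1
  obtain ⟨hd2, -, hc0⟩ := contDiff_succ_iff_deriv.mp h1
  have hcont2 : Continuous η2 := by rw [hη2def]; exact contDiff_zero.mp hc0
  have hcont1 : Continuous η1 := hd2.continuous
  have hcont0 : Continuous η := hd1.continuous
  have hηd : ∀ t, HasDerivAt η (η1 t) t := fun t => hη1def ▸ (hd1 t).hasDerivAt
  have hη1d : ∀ t, HasDerivAt η1 (η2 t) t := fun t => hη2def ▸ (hd2 t).hasDerivAt
  -- continuous bilinear form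
  obtain ⟨A, hA⟩ : ∃ A : V →L[ℝ] V →L[ℝ] ℝ, ∀ u v, A u v = a u v :=
    ⟨LinearMap.mkContinuous₂
      (LinearMap.mk₂ ℝ a ha_add
        (fun x u v => by simpa [smul_eq_mul] using ha_smul x u v)
        (fun m n₁ n₂ => by rw [ha_symm, ha_add, ha_symm n₁ m, ha_symm n₂ m])
        (fun x m n => by rw [ha_symm, ha_smul, ha_symm]; simp [smul_eq_mul]))
      C (fun u v => by simpa [Real.norm_eq_abs] using hC u v), fun u v => rfl⟩
  have hAnonneg : ∀ v : V, 0 ≤ A v v := by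
    intro v; rw [hA]; nlinarith [ha_coer v, sq_nonneg ‖v‖]
  -- the energy
  obtain ⟨E, hEdef⟩ : ∃ f : ℝ → ℝ, f = fun t =>
      1/2 * (inner ℝ (ι (η1 t)) (ι (η1 t)) : ℝ) + 1/2 * A (η t) (η t) := ⟨_, rfl⟩
  obtain ⟨E', hE'def⟩ : ∃ f : ℝ → ℝ, f = fun t =>
      (inner ℝ (ι (η2 t)) (ι (η1 t)) : ℝ) + a (η t) (η1 t) := ⟨_, rfl⟩
  have hEapp : ∀ t, E t =
      1/2 * (inner ℝ (ι (η1 t)) (ι (η1 t)) : ℝ) + 1/2 * A (η t) (η t) :=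
    fun t => by rw [hEdef]
  have hE'app : ∀ t, E' t =
      (inner ℝ (ι (η2 t)) (ι (η1 t)) : ℝ) + a (η t) (η1 t) :=
    fun t => by rw [hE'def]
  have hιd : ∀ t, HasDerivAt (fun s => ι (η1 s)) (ι (η2 t)) t := fun t =>
    ι.hasFDerivAt.comp_hasDerivAt t (hη1d t)
  have hE'at : ∀ t, HasDerivAt E (E' t) t := by
    intro t
    rw [hEdef, hE'app]
    have hinner : HasDerivAt (fun s => (inner ℝ (ι (η1 s)) (ι (η1 s)) : ℝ))
        ((inner ℝ (ι (η1 t)) (ι (η2 t)) : ℝ) + (inner ℝ (ι (η2 t)) (ι (η1 t)) : ℝ)) t :=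
      (hιd t).inner ℝ (hιd t)
    have hAc : HasDerivAt (fun s => A (η s)) (A (η1 t)) t :=
      A.hasFDerivAt.comp_hasDerivAt t (hηd t)
    have hbil : HasDerivAt (fun s => A (η s) (η s))
        ((A (η1 t)) (η t) + (A (η t)) (η1 t)) t := hAc.clm_apply (hηd t)
    have := (hinner.const_mul (1/2 : ℝ)).add (hbil.const_mul (1/2 : ℝ))
    refine this.congr_deriv ?_
    rw [hA, hA, real_inner_comm (ι (η2 t)) (ι (η1 t)), ha_symm (η1 t) (η t)]
    ring
  have hEcont : Continuous E := by
    rw [hEdef]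
    have hA0 : Continuous fun t => A (η t) (η t) :=
      (A.continuous.comp hcont0).clm_apply hcont0
    have hi0 : Continuous fun t => (inner ℝ (ι (η1 t)) (ι (η1 t)) : ℝ) :=
      (ι.continuous.comp hcont1).inner (ι.continuous.comp hcont1)
    exact (continuous_const.mul hi0).add (continuous_const.mul hA0)
  have hE'cont : Continuous E' := by
    rw [hE'def]
    have ha0 : Continuous fun t => a (η t) (η1 t) := by
      have : Continuous fun t => A (η t) (η1 t) :=
        (A.continuous.comp hcont0).clm_apply hcont1
      simpa [hA] using this
    exact ((Continuous.inner ((ι.continuous.comp hcont2))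
      (ι.continuous.comp hcont1)).add ha0)
  have hEnonneg : ∀ t, 0 ≤ E t := by
    intro t
    rw [hEapp]
    have h1 : (0:ℝ) ≤ inner ℝ (ι (η1 t)) (ι (η1 t)) := real_inner_self_nonneg
    nlinarith [hAnonneg (η t)]
  have hE0 : E 0 = 0 := by
    rw [hEapp]
    simp [hη'0, hη0]
  -- abbreviations for the r-integral
  obtain ⟨Ir, hIrdef⟩ : ∃ x : ℝ, x = ∫ t in (0:ℝ)..T, ‖r t‖ ^ 2 := ⟨_, rfl⟩
  obtain ⟨R, hRdef⟩ : ∃ x : ℝ, x = Real.sqrt Ir := ⟨_, rfl⟩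
  have hrn : Continuous fun s => ‖r s‖ := hr.norm
  have hrn2 : Continuous fun s : ℝ => ‖r s‖ ^ 2 := by fun_prop
  have hIr : 0 ≤ Ir := by
    rw [hIrdef]
    exact intervalIntegral.integral_nonneg hT.le (fun u _ => sq_nonneg _)
  have hR0 : 0 ≤ R := by rw [hRdef]; exact Real.sqrt_nonneg _
  have hRsq : R ^ 2 = Ir := by rw [hRdef]; exact Real.sq_sqrt hIr
  have hsT : 0 < Real.sqrt T := Real.sqrt_pos.mpr hT
  have hTss : Real.sqrt T * Real.sqrt T = T := Real.mul_self_sqrt hT.le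
  -- Step A : L¹ bound on r
  have stepA : ∀ t ∈ Set.Icc (0:ℝ) T, (∫ s in (0:ℝ)..t, ‖r s‖) ≤ Real.sqrt T * R := by
    intro t ht
    refine le_of_forall_pos_le_add fun ε hε => ?_
    obtain ⟨δ, hδdef⟩ : ∃ x : ℝ, x = ε / Real.sqrt T := ⟨_, rfl⟩
    have hδ0 : 0 < δ := by rw [hδdef]; positivity
    obtain ⟨k, hkdef⟩ : ∃ x : ℝ, x = (R + δ) / Real.sqrt T := ⟨_, rfl⟩
    have hk0 : 0 < k := by rw [hkdef]; positivity
    have hTk : Real.sqrt T * k = R + δ := by rw [hkdef]; field_simp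
    have hpt : ∀ s, ‖r s‖ ≤ ‖r s‖ ^ 2 / (2*k) + k/2 := by
      intro s
      rw [div_add_div _ _ (by positivity) two_ne_zero, le_div_iff₀ (by positivity)]
      nlinarith [sq_nonneg (‖r s‖ - k)]
    have hint1 : (∫ s in (0:ℝ)..t, ‖r s‖) ≤
        ∫ s in (0:ℝ)..t, (‖r s‖ ^ 2 / (2*k) + k/2) := by
      refine intervalIntegral.integral_mono_on ht.1
        (hrn.intervalIntegrable _ _) ?_ (fun s _ => hpt s)
      exact ((hrn2.div_const _).add continuous_const).intervalIntegrable _ _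
    have hint2 : (∫ s in (0:ℝ)..t, (‖r s‖ ^ 2 / (2*k) + k/2)) =
        (∫ s in (0:ℝ)..t, ‖r s‖ ^ 2) / (2*k) + k * t / 2 := by
      rw [intervalIntegral.integral_add ((hrn2.div_const _).intervalIntegrable _ _)
        (continuous_const.intervalIntegrable _ _),
        intervalIntegral.integral_div, intervalIntegral.integral_const]
      simp [smul_eq_mul]
      ring
    have hsub : (∫ s in (0:ℝ)..t, ‖r s‖ ^ 2) ≤ Ir := by
      have hadj := intervalIntegral.integral_add_adjacent_intervals (μ := volume)
        (hrn2.intervalIntegrable 0 t) (hrn2.intervalIntegrable t T)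
      have hpos : 0 ≤ ∫ s in t..T, ‖r s‖ ^ 2 :=
        intervalIntegral.integral_nonneg ht.2 (fun u _ => sq_nonneg _)
      rw [hIrdef]
      linarith [hadj]
    have hdiv : Ir / (2*k) ≤ R * Real.sqrt T / 2 := by
      rw [div_le_div_iff₀ (by positivity) two_pos]
      calc Ir * 2 ≤ R * (R + δ) * 2 := by nlinarith [hRsq]
        _ = R * (Real.sqrt T * k) * 2 := by rw [hTk]
        _ = R * Real.sqrt T * (2 * k) := by ring
    have hk2 : k * t / 2 ≤ (R + δ) * Real.sqrt T / 2 := by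
      have h1 : k * t ≤ k * T := by nlinarith [ht.2]
      have h2 : k * T = (R + δ) * Real.sqrt T := by
        rw [hkdef]
        field_simp
        linear_combination hTss.symm
      linarith
    have hδT : δ * Real.sqrt T = ε := by rw [hδdef]; field_simp
    have hfin : (∫ s in (0:ℝ)..t, ‖r s‖) ≤ Ir / (2*k) + k * t / 2 := by
      calc (∫ s in (0:ℝ)..t, ‖r s‖) ≤ _ := hint1
        _ = _ := hint2
        _ ≤ Ir / (2*k) + k * t / 2 := by gcongr
    nlinarith [hfin, hdiv, hk2, hδT, hsT, hδ0]
  -- Step B : energy bound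
  have stepB : ∀ t ∈ Set.Icc (0:ℝ) T, E t ≤ T * Ir / 2 := by
    intro t ht
    have key : Real.sqrt (E t) ≤ Real.sqrt 2 / 2 * (Real.sqrt T * R) := by
      refine le_of_forall_pos_le_add fun δ hδ => ?_
      have hδ2 : ∀ s, (0:ℝ) < E s + δ^2 := fun s => by nlinarith [hEnonneg s]
      obtain ⟨F, hFdef⟩ : ∃ f : ℝ → ℝ, f = fun s => Real.sqrt (E s + δ^2) := ⟨_, rfl⟩
      obtain ⟨F', hF'def⟩ : ∃ f : ℝ → ℝ,
        f = fun s => 1 / (2 * Real.sqrt (E s + δ^2)) * E' s := ⟨_, rfl⟩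
      have hF'app : ∀ s, F' s = 1 / (2 * Real.sqrt (E s + δ^2)) * E' s :=
        fun s => by rw [hF'def]
      have hFapp : ∀ s, F s = Real.sqrt (E s + δ^2) := fun s => by rw [hFdef]
      have hFd : ∀ s, HasDerivAt F (F' s) s := by
        intro s
        rw [hFdef, hF'app]
        exact (Real.hasDerivAt_sqrt (hδ2 s).ne').comp s ((hE'at s).add_const _)
      have hF'cont : Continuous F' := by
        rw [hF'def]
        have hd : Continuous fun s => 2 * Real.sqrt (E s + δ^2) :=
          continuous_const.mul ((hEcont.add continuous_const).sqrt)
        exact ((continuous_const.div hd (fun s => by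
          have := Real.sqrt_pos.mpr (hδ2 s); positivity)).mul hE'cont)
      have hFTC := intervalIntegral.integral_eq_sub_of_hasDerivAt
        (f := F) (f' := F') (a := 0) (b := t) (fun x _ => hFd x)
        (hF'cont.intervalIntegrable _ _)
      have hF0 : F 0 = δ := by
        rw [hFapp, hE0, zero_add]
        exact Real.sqrt_sq hδ.le
      have hptF : ∀ s ∈ Set.Icc (0:ℝ) t, F' s ≤ Real.sqrt 2 / 2 * ‖r s‖ := by
        intro s hs
        have hsT' : s ∈ Set.Icc (0:ℝ) T := ⟨hs.1, hs.2.trans ht.2⟩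
        have hQ : 0 < Real.sqrt (E s + δ^2) := Real.sqrt_pos.mpr (hδ2 s)
        have hE's : E' s = (inner ℝ (r s) (ι (η1 s)) : ℝ) := by
          rw [hE'app]; exact henergy s hsT'
        have hb2 : ‖ι (η1 s)‖ ^ 2 ≤ 2 * (E s + δ^2) := by
          have hEs := hEapp s
          rw [real_inner_self_eq_norm_sq] at hEs
          nlinarith [sq_nonneg δ, hAnonneg (η s)]
        have hb : ‖ι (η1 s)‖ ≤ Real.sqrt 2 * Real.sqrt (E s + δ^2) := by
          rw [← Real.sqrt_mul (by norm_num : (0:ℝ) ≤ 2)]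
          rw [Real.le_sqrt (norm_nonneg _) (by nlinarith [hδ2 s])]
          exact hb2
        have hE'le : E' s ≤ ‖r s‖ * (Real.sqrt 2 * Real.sqrt (E s + δ^2)) := by
          rw [hE's]
          calc (inner ℝ (r s) (ι (η1 s)) : ℝ) ≤ ‖r s‖ * ‖ι (η1 s)‖ :=
                real_inner_le_norm _ _
            _ ≤ _ := by nlinarith [norm_nonneg (r s)]
        rw [hF'app]
        calc 1 / (2 * Real.sqrt (E s + δ^2)) * E' s
            ≤ 1 / (2 * Real.sqrt (E s + δ^2)) *
              (‖r s‖ * (Real.sqrt 2 * Real.sqrt (E s + δ^2))) :=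
            mul_le_mul_of_nonneg_left hE'le (by positivity)
          _ = Real.sqrt 2 / 2 * ‖r s‖ := by
            field_simp
      have hintF : (∫ s in (0:ℝ)..t, F' s) ≤
          ∫ s in (0:ℝ)..t, Real.sqrt 2 / 2 * ‖r s‖ :=
        intervalIntegral.integral_mono_on ht.1 (hF'cont.intervalIntegrable _ _)
          ((continuous_const.mul hrn).intervalIntegrable _ _) hptF
      have hintr : (∫ s in (0:ℝ)..t, Real.sqrt 2 / 2 * ‖r s‖) =
          Real.sqrt 2 / 2 * ∫ s in (0:ℝ)..t, ‖r s‖ :=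
        intervalIntegral.integral_const_mul _ _
      have hrb := stepA t ht
      have hFt : F t ≤ Real.sqrt 2 / 2 * (Real.sqrt T * R) + δ := by
        have hchain : F t - F 0 ≤ Real.sqrt 2 / 2 * (Real.sqrt T * R) := by
          rw [← hFTC]
          calc (∫ s in (0:ℝ)..t, F' s) ≤ _ := hintF
            _ = _ := hintr
            _ ≤ Real.sqrt 2 / 2 * (Real.sqrt T * R) :=
              mul_le_mul_of_nonneg_left hrb (by positivity)
        rw [hF0] at hchain
        linarith
      have hmono : Real.sqrt (E t) ≤ F t := by
        rw [hFapp]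
        exact Real.sqrt_le_sqrt (by nlinarith [sq_nonneg δ])
      linarith
    have hsq := pow_le_pow_left₀ (Real.sqrt_nonneg (E t)) key 2
    rw [Real.sq_sqrt (hEnonneg t)] at hsq
    have hrhs : (Real.sqrt 2 / 2 * (Real.sqrt T * R)) ^ 2 = T * Ir / 2 := by
      rw [mul_pow, mul_pow, div_pow, Real.sq_sqrt (by norm_num : (0:ℝ) ≤ 2),
        Real.sq_sqrt hT.le, hRsq]
      ring
    linarith [hrhs ▸ hsq]
  -- Step C : pointwise bounds
  have hb1 : ∀ t ∈ Set.Icc (0:ℝ) T, ‖ι (η1 t)‖ ^ 2 ≤ T * Ir := by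
    intro t ht
    have hEs := hEapp t
    rw [real_inner_self_eq_norm_sq] at hEs
    nlinarith [stepB t ht, hAnonneg (η t)]
  have hb2 : ∀ t ∈ Set.Icc (0:ℝ) T, ‖η t‖ ^ 2 ≤ T * Ir / c := by
    intro t ht
    have hEs := hEapp t
    rw [real_inner_self_eq_norm_sq] at hEs
    have hco := ha_coer (η t)
    rw [← hA] at hco
    rw [le_div_iff₀ hc]
    nlinarith [stepB t ht, sq_nonneg ‖ι (η1 t)‖]
  -- integrate the pointwise bounds
  have hcι : Continuous fun t => ‖ι (η1 t)‖ ^ 2 := by fun_prop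
  have hcη : Continuous fun t => ‖η t‖ ^ 2 := by fun_prop
  have hi1 : (∫ t in (0:ℝ)..T, ‖ι (η1 t)‖ ^ 2) ≤ T * (T * Ir) := by
    calc (∫ t in (0:ℝ)..T, ‖ι (η1 t)‖ ^ 2) ≤ ∫ _ in (0:ℝ)..T, T * Ir :=
        intervalIntegral.integral_mono_on hT.le (hcι.intervalIntegrable _ _)
          (continuous_const.intervalIntegrable _ _) hb1
      _ = T * (T * Ir) := by rw [intervalIntegral.integral_const]; simp
  have hi2 : (∫ t in (0:ℝ)..T, ‖η t‖ ^ 2) ≤ T * (T * Ir / c) := by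
    calc (∫ t in (0:ℝ)..T, ‖η t‖ ^ 2) ≤ ∫ _ in (0:ℝ)..T, T * Ir / c :=
        intervalIntegral.integral_mono_on hT.le (hcη.intervalIntegrable _ _)
          (continuous_const.intervalIntegrable _ _) hb2
      _ = T * (T * Ir / c) := by rw [intervalIntegral.integral_const]; simp
  have hs1 : Real.sqrt (∫ t in (0:ℝ)..T, ‖ι (η1 t)‖ ^ 2) ≤ T * R := by
    calc Real.sqrt (∫ t in (0:ℝ)..T, ‖ι (η1 t)‖ ^ 2) ≤ Real.sqrt (T * (T * Ir)) :=
        Real.sqrt_le_sqrt hi1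
      _ = T * R := by
        rw [show T * (T * Ir) = T^2 * Ir by ring, Real.sqrt_mul (sq_nonneg T),
          Real.sqrt_sq hT.le, hRdef]
  have hsc : 0 < Real.sqrt c := Real.sqrt_pos.mpr hc
  have hs2 : Real.sqrt (∫ t in (0:ℝ)..T, ‖η t‖ ^ 2) ≤ T * R / Real.sqrt c := by
    calc Real.sqrt (∫ t in (0:ℝ)..T, ‖η t‖ ^ 2) ≤ Real.sqrt (T * (T * Ir / c)) :=
        Real.sqrt_le_sqrt hi2
      _ = T * R / Real.sqrt c := by
        rw [show T * (T * Ir / c) = T^2 * Ir / c by ring,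
          Real.sqrt_div (by positivity) c,
          Real.sqrt_mul (sq_nonneg T), Real.sqrt_sq hT.le, hRdef]
  -- final algebra
  have hgoalR : Real.sqrt (∫ t in (0:ℝ)..T, ‖r t‖ ^ 2) = R := by
    rw [hRdef, hIrdef]
  rw [hgoalR]
  have hs2' : Real.sqrt 2 / 2 ≤ Real.sqrt 2 := by nlinarith [Real.sqrt_nonneg 2]
  have h2ge1 : (1:ℝ) ≤ Real.sqrt 2 := by
    rw [show (1:ℝ) = Real.sqrt 1 by simp]
    exact Real.sqrt_le_sqrt (by norm_num)
  rcases le_total (Real.sqrt 2 / 2) (Real.sqrt c) with hmin | hmin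
  · rw [min_eq_left hmin]
    have hc1 : 1 / Real.sqrt c ≤ Real.sqrt 2 := by
      rw [div_le_iff₀ hsc]
      nlinarith [Real.sq_sqrt (by norm_num : (0:ℝ) ≤ 2)]
    have hrw : 2 * T / (Real.sqrt 2 / 2) * R = 2 * Real.sqrt 2 * T * R := by
      have hs2ne : Real.sqrt 2 ≠ 0 := by positivity
      field_simp
      ring_nf
      linear_combination (-R) * Real.sq_sqrt (show (0:ℝ) ≤ 2 by norm_num)
    rw [hrw]
    have hTRc : T * R / Real.sqrt c = T * R * (1 / Real.sqrt c) := by ring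
    have h1 : T * R / Real.sqrt c ≤ T * R * Real.sqrt 2 := by
      rw [hTRc]
      exact mul_le_mul_of_nonneg_left hc1 (by positivity)
    calc Real.sqrt (∫ t in (0:ℝ)..T, ‖ι (η1 t)‖ ^ 2) +
          Real.sqrt (∫ t in (0:ℝ)..T, ‖η t‖ ^ 2) ≤ T * R + T * R * Real.sqrt 2 := by
          linarith [hs1, hs2, h1]
      _ ≤ 2 * Real.sqrt 2 * T * R := by nlinarith [mul_nonneg hT.le hR0, h2ge1]
  · rw [min_eq_right hmin]
    have hsqrt2le2 : Real.sqrt 2 ≤ 2 := by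
      nlinarith [Real.sq_sqrt (show (0:ℝ) ≤ 2 by norm_num), Real.sqrt_nonneg 2]
    have hcle : Real.sqrt c ≤ 1 := by linarith [hmin, hsqrt2le2]
    have h1 : T * R ≤ T * R / Real.sqrt c := by
      rw [le_div_iff₀ hsc]
      nlinarith [mul_nonneg hT.le hR0]
    have hrw : 2 * T / Real.sqrt c * R = 2 * (T * R / Real.sqrt c) := by ring
    rw [hrw]
    linarith [hs1, hs2]
end
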